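/- arXiv:2506.02186 — 10 statements merged into one kernel-verified Lean document; each statement's English description precedes it below -/
import Mathlib

section
/- Let L ≥ 1 and for each ℓ ∈ {1,…,L} let (η_{i,ℓ})_{i≥0} be a real sequence with η_{0,ℓ} ≠ 0. Define for each ℓ the sequence (φ_{h,ℓ})_{h≥0} by φ_{0,ℓ} = η_{1,ℓ}/η_{0,ℓ} and, for h ≥ 1, φ_{h,ℓ} = (1/η_{0,ℓ})·[(h+1)·η_{h+1,ℓ} − ∑_{t=1}^{h} η_{t,ℓ}·φ_{h−t,ℓ}]. Define (δ_i)_{i≥0} by δ_0 = ∏_{ℓ=1}^{L} η_{0,ℓ} and, for i ≥ 1, δ_i = (1/i)·∑_{h=1}^{i} δ_{i−h}·∑_{ℓ=1}^{L} φ_{h−1,ℓ}. Then for every i ≥ 0, δ_i equals the i-th coefficient of the product of formal power series ∏_{ℓ=1}^{L} (∑_{j≥0} η_{j,ℓ} X^j); that is, δ_i = ∑_{(i_1,…,i_L) ∈ ℕ^L, i_1+⋯+i_L = i} ∏_{ℓ=1}^{L} η_{i_ℓ,ℓ}. -/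
open scoped BigOperators

/-- The recursively defined coefficients `δ i` (via the logarithmic-derivative
coefficients `φ ℓ h` of each factor) equal the Cauchy-product coefficients of the
product of the `L` power series `∑ j, η ℓ j • X^j`. -/
theorem stmt_0 (L : ℕ) (hL : 1 ≤ L) (η : Fin L → ℕ → ℝ)
    (hη0 : ∀ ℓ, η ℓ 0 ≠ 0)
    (φ : Fin L → ℕ → ℝ)
    (hφ0 : ∀ ℓ, φ ℓ 0 = η ℓ 1 / η ℓ 0)
    (hφ : ∀ ℓ, ∀ h : ℕ, 1 ≤ h →
      φ ℓ h = (1 / η ℓ 0) *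
        (((h : ℝ) + 1) * η ℓ (h + 1) - ∑ t ∈ Finset.Icc 1 h, η ℓ t * φ ℓ (h - t)))
    (δ : ℕ → ℝ)
    (hδ0 : δ 0 = ∏ ℓ, η ℓ 0)
    (hδ : ∀ i : ℕ, 1 ≤ i →
      δ i = (1 / (i : ℝ)) * ∑ h ∈ Finset.Icc 1 i, δ (i - h) * ∑ ℓ, φ ℓ (h - 1)) :
    ∀ i : ℕ,
      δ i = PowerSeries.coeff i (∏ ℓ, PowerSeries.mk (η ℓ)) ∧
      δ i = ∑ p ∈ Finset.Nat.antidiagonalTuple L i, ∏ ℓ, η ℓ (p ℓ) := by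
  classical
  set F : Fin L → PowerSeries ℝ := fun ℓ => PowerSeries.mk (η ℓ) with hF
  set P : PowerSeries ℝ := ∏ ℓ, F ℓ with hP
  -- Step 1 : convolution identity for φ
  have key : ∀ ℓ (h : ℕ), ∑ t ∈ Finset.range (h + 1), η ℓ t * φ ℓ (h - t)
      = ((h : ℝ) + 1) * η ℓ (h + 1) := by
    intro ℓ h
    have hIcc : ∀ h : ℕ, ∑ t ∈ Finset.Icc 1 h, η ℓ t * φ ℓ (h - t)
        = ∑ i ∈ Finset.range h, η ℓ (i + 1) * φ ℓ (h - (i + 1)) := by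
      intro h
      rw [← Finset.Ico_add_one_right_eq_Icc, Finset.sum_Ico_eq_sum_range]
      refine Finset.sum_congr (by rw [Nat.add_sub_cancel]) fun i _ => ?_
      rw [Nat.add_comm 1 i]
    cases h with
    | zero =>
      simpa [hφ0 ℓ] using mul_div_cancel₀ (η ℓ 1) (hη0 ℓ)
    | succ n =>
      rw [Finset.sum_range_succ']
      have hrec := hφ ℓ (n + 1) (Nat.le_add_left 1 n)
      have h3 : η ℓ 0 * φ ℓ (n + 1)
          = ((n : ℝ) + 1 + 1) * η ℓ (n + 2)
            - ∑ t ∈ Finset.Icc 1 (n + 1), η ℓ t * φ ℓ (n + 1 - t) := by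
        rw [hrec, ← mul_assoc, mul_one_div, div_self (hη0 ℓ), one_mul]
        push_cast; ring_nf
      rw [hIcc (n + 1)] at h3
      simp only [Nat.succ_sub_succ_eq_sub] at h3 ⊢
      push_cast
      linarith [h3]
  -- Step 2 : `mk (φ ℓ)` is the logarithmic derivative of `F ℓ`
  have hlog : ∀ ℓ, F ℓ * PowerSeries.mk (φ ℓ) = PowerSeries.derivative ℝ (F ℓ) := by
    intro ℓ
    ext h
    rw [PowerSeries.coeff_mul, PowerSeries.coeff_derivative,
      Finset.Nat.sum_antidiagonal_eq_sum_range_succ_mk]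
    simp only [hF, PowerSeries.coeff_mk]
    rw [key ℓ h]
    ring
  -- Step 3 : logarithmic derivative of a product
  have hprod : ∀ s : Finset (Fin L),
      PowerSeries.derivative ℝ (∏ ℓ ∈ s, F ℓ)
        = (∑ ℓ ∈ s, PowerSeries.mk (φ ℓ)) * ∏ ℓ ∈ s, F ℓ := by
    intro s
    induction s using Finset.induction_on with
    | empty => simp
    | @insert a s ha ih =>
      rw [Finset.prod_insert ha, Finset.sum_insert ha, Derivation.leibniz, ih,
        ← hlog a]
      simp only [smul_eq_mul]
      ring
  -- Step 4 : the recursion satisfied by the coefficients of `P`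
  set c : ℕ → ℝ := fun i => PowerSeries.coeff i P with hc
  have hc0 : c 0 = ∏ ℓ, η ℓ 0 := by
    simp only [hc, hP, PowerSeries.coeff_zero_eq_constantCoeff, map_prod]
    exact Finset.prod_congr rfl fun ℓ _ => by simp [hF]
  have hcrec : ∀ i : ℕ, 1 ≤ i →
      (i : ℝ) * c i = ∑ h ∈ Finset.Icc 1 i, c (i - h) * ∑ ℓ, φ ℓ (h - 1) := by
    intro i hi
    have h1 := congrArg (PowerSeries.coeff (i - 1)) (hprod Finset.univ)
    rw [PowerSeries.coeff_derivative, PowerSeries.coeff_mul,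
      Finset.Nat.sum_antidiagonal_eq_sum_range_succ_mk] at h1
    have hi1 : i - 1 + 1 = i := Nat.succ_pred_eq_of_pos hi
    rw [hi1] at h1
    have hgoal : ∑ h ∈ Finset.Icc 1 i, c (i - h) * ∑ ℓ, φ ℓ (h - 1)
        = ∑ k ∈ Finset.range (Nat.succ (i - 1)),
            (PowerSeries.coeff (k, i - 1 - k).1 (∑ ℓ, PowerSeries.mk (φ ℓ)))
              * PowerSeries.coeff (k, i - 1 - k).2 (∏ ℓ, F ℓ) := by
      rw [← Finset.Ico_add_one_right_eq_Icc, Finset.sum_Ico_eq_sum_range]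
      refine Finset.sum_congr (by congr 1; omega) fun a _ => ?_
      simp only [map_sum, PowerSeries.coeff_mk]
      rw [show 1 + a - 1 = a from by omega,
        show i - (1 + a) = i - 1 - a from by omega, mul_comm]
    rw [hgoal, ← h1, Nat.cast_sub hi]
    push_cast
    ring
  -- Step 5 : δ = c by strong induction
  have hδc : ∀ i : ℕ, δ i = c i := by
    intro i
    induction i using Nat.strong_induction_on with
    | _ i ih =>
      cases Nat.eq_zero_or_pos i with
      | inl h0 => rw [h0, hδ0, hc0]
      | inr hpos =>
        rw [hδ i hpos]
        have : ∑ h ∈ Finset.Icc 1 i, δ (i - h) * ∑ ℓ, φ ℓ (h - 1)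
            = ∑ h ∈ Finset.Icc 1 i, c (i - h) * ∑ ℓ, φ ℓ (h - 1) := by
          refine Finset.sum_congr rfl fun h hh => ?_
          rw [ih (i - h) (by simp only [Finset.mem_Icc] at hh; omega)]
        rw [this, ← hcrec i hpos]
        have hi0 : (i : ℝ) ≠ 0 := Nat.cast_ne_zero.mpr (by omega)
        field_simp
  -- Step 6 : coefficients of the product as antidiagonal sums
  have hcoeff : ∀ i : ℕ, c i = ∑ p ∈ Finset.Nat.antidiagonalTuple L i, ∏ ℓ, η ℓ (p ℓ) := by
    intro i
    simp only [hc, hP]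
    rw [PowerSeries.coeff_prod]
    refine Finset.sum_nbij' (fun l => ⇑l)
      (fun p => Finsupp.equivFunOnFinite.symm p) ?_ ?_ ?_ ?_ ?_
    · intro l hl
      simp only [Finset.mem_finsuppAntidiag] at hl
      rw [Finset.Nat.mem_antidiagonalTuple]
      exact hl.1
    · intro p hp
      rw [Finset.Nat.mem_antidiagonalTuple] at hp
      simp only [Finset.mem_finsuppAntidiag]
      constructor
      · simpa using hp
      · exact Finset.subset_univ _
    · intro l _; exact Finsupp.equivFunOnFinite.symm_apply_apply l
    · intro p _; rfl
    · intro l _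
      exact Finset.prod_congr rfl fun ℓ _ => by simp [hF]
  intro i
  exact ⟨hδc i, (hδc i).trans (hcoeff i)⟩
end

section
/- Let θ > 0, β₁ > 0, β₂ > 0 and let (η¹_i)_{i≥0}, (η²_j)_{j≥0} be real sequences such that for every x ≥ 0 the series ∑_{i≥0} |η¹_i|·x^{θi}/Γ(β₁+θi) and ∑_{j≥0} |η²_j|·x^{θj}/Γ(β₂+θj) converge. Define f₁(u) = ∑_{i≥0} η¹_i·u^{β₁+θi−1}/Γ(β₁+θi) and f₂(u) = ∑_{j≥0} η²_j·u^{β₂+θj−1}/Γ(β₂+θj) for u > 0. Then for every x > 0, the convolution satisfies ∫₀^x f₁(u)·f₂(x−u) du = ∑_{k≥0} δ_k·x^{β₁+β₂+θk−1}/Γ(β₁+β₂+θk), where δ_k = ∑_{i+j=k} η¹_i·η²_j. -/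
open MeasureTheory intervalIntegral Set

/-- Real Beta integral on [0,1]. -/
lemma real_beta_one {a b : ℝ} (ha : 0 < a) (hb : 0 < b) :
    ∫ t in (0:ℝ)..1, t ^ (a - 1) * (1 - t) ^ (b - 1) =
      Real.Gamma a * Real.Gamma b / Real.Gamma (a + b) := by
  have key := Complex.Gamma_mul_Gamma_eq_betaIntegral
    (s := (a:ℂ)) (t := (b:ℂ)) (by simpa using ha) (by simpa using hb)
  have hint : Complex.betaIntegral (a:ℂ) (b:ℂ) =
      ((∫ t in (0:ℝ)..1, t ^ (a - 1) * (1 - t) ^ (b - 1) : ℝ) : ℂ) := by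
    rw [Complex.betaIntegral, ← intervalIntegral.integral_ofReal]
    refine intervalIntegral.integral_congr fun t ht => ?_
    rw [uIcc_of_le (by norm_num : (0:ℝ) ≤ 1)] at ht
    rw [Complex.ofReal_mul, Complex.ofReal_cpow ht.1, Complex.ofReal_cpow (by linarith [ht.2] : (0:ℝ) ≤ 1 - t)]
    push_cast
    ring
  rw [hint, ← Complex.ofReal_add, Complex.Gamma_ofReal, Complex.Gamma_ofReal,
    Complex.Gamma_ofReal, ← Complex.ofReal_mul, ← Complex.ofReal_mul] at key
  have := Complex.ofReal_inj.mp key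
  have hG : Real.Gamma (a + b) ≠ 0 := (Real.Gamma_pos_of_pos (by linarith)).ne'
  field_simp
  linarith [this]

/-- Integrability of the Beta integrand on `[0, x]`. -/
lemma beta_integrand_integrable {a b x : ℝ} (ha : 0 < a) (hb : 0 < b) (hx : 0 < x) :
    IntervalIntegrable (fun u => u ^ (a - 1) * (x - u) ^ (b - 1)) volume 0 x := by
  have h1 : IntervalIntegrable (fun u : ℝ => u ^ (a - 1)) volume 0 (x/2) :=
    intervalIntegral.intervalIntegrable_rpow' (by linarith)
  have h2 : IntervalIntegrable (fun u : ℝ => u ^ (b - 1)) volume 0 (x/2) :=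
    intervalIntegral.intervalIntegrable_rpow' (by linarith)
  have h2' : IntervalIntegrable (fun u : ℝ => (x - u) ^ (b - 1)) volume (x/2) x := by
    have := h2.comp_sub_left x
    simpa [show x - x/2 = x/2 from by ring] using this.symm
  have left : IntervalIntegrable (fun u => u ^ (a - 1) * (x - u) ^ (b - 1)) volume 0 (x/2) := by
    apply h1.mul_continuousOn
    intro u hu
    rw [uIcc_of_le (by linarith)] at hu
    apply (ContinuousAt.continuousWithinAt _)
    exact (continuousAt_const.sub continuousAt_id).rpow_const
      (Or.inl (by intro h; simp only [Pi.sub_apply, id] at h; nlinarith [hu.2]))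
  have right : IntervalIntegrable (fun u => u ^ (a - 1) * (x - u) ^ (b - 1)) volume (x/2) x := by
    apply h2'.continuousOn_mul
    intro u hu
    rw [uIcc_of_le (by linarith)] at hu
    apply (ContinuousAt.continuousWithinAt _)
    exact continuousAt_id.rpow_const (Or.inl (by intro h; simp only [id] at h; nlinarith [hu.1]))
  exact left.trans right

/-- Real Beta integral on `[0, x]`. -/
lemma real_beta_scaled {a b x : ℝ} (ha : 0 < a) (hb : 0 < b) (hx : 0 < x) :
    ∫ u in (0:ℝ)..x, u ^ (a - 1) * (x - u) ^ (b - 1) =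
      Real.Gamma a * Real.Gamma b / Real.Gamma (a + b) * x ^ (a + b - 1) := by
  have hsub : ∫ t in (0:ℝ)..1, (x * t) ^ (a - 1) * (x - x * t) ^ (b - 1)
      = x⁻¹ • ∫ u in (x*0:ℝ)..(x*1), u ^ (a - 1) * (x - u) ^ (b - 1) :=
    intervalIntegral.integral_comp_mul_left (fun u => u ^ (a - 1) * (x - u) ^ (b - 1)) hx.ne'
  simp only [mul_zero, mul_one, smul_eq_mul] at hsub
  have heq : ∫ t in (0:ℝ)..1, (x * t) ^ (a - 1) * (x - x * t) ^ (b - 1)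
      = x ^ (a - 1) * x ^ (b - 1) *
        ∫ t in (0:ℝ)..1, t ^ (a - 1) * (1 - t) ^ (b - 1) := by
    rw [← intervalIntegral.integral_const_mul]
    refine intervalIntegral.integral_congr fun t ht => ?_
    rw [uIcc_of_le (by norm_num : (0:ℝ) ≤ 1)] at ht
    have h1t : (0:ℝ) ≤ 1 - t := by linarith [ht.2]
    rw [Real.mul_rpow hx.le ht.1, show x - x * t = x * (1 - t) by ring,
      Real.mul_rpow hx.le h1t]
    ring
  rw [heq, real_beta_one ha hb] at hsub
  have hxv : x ^ (a + b - 1) = x * (x ^ (a - 1) * x ^ (b - 1)) := by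
    rw [show a + b - 1 = 1 + (a - 1) + (b - 1) by ring, Real.rpow_add hx,
      Real.rpow_add hx, Real.rpow_one]
    ring
  rw [hxv]
  field_simp at hsub ⊢
  linarith [hsub]

/-- The Beta function is antitone in each argument. -/
lemma beta_mono {a b a' b' : ℝ} (ha : 0 < a) (hb : 0 < b) (haa : a ≤ a') (hbb : b ≤ b') :
    Real.Gamma a' * Real.Gamma b' / Real.Gamma (a' + b') ≤
      Real.Gamma a * Real.Gamma b / Real.Gamma (a + b) := by
  have ha' : 0 < a' := lt_of_lt_of_le ha haa
  have hb' : 0 < b' := lt_of_lt_of_le hb hbb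
  rw [← real_beta_one ha' hb', ← real_beta_one ha hb]
  have hint : IntervalIntegrable (fun u => u ^ (a - 1) * (1 - u) ^ (b - 1)) volume 0 1 := by
    simpa using beta_integrand_integrable ha hb one_pos
  have hint' : IntervalIntegrable (fun u => u ^ (a' - 1) * (1 - u) ^ (b' - 1)) volume 0 1 := by
    simpa using beta_integrand_integrable ha' hb' one_pos
  refine intervalIntegral.integral_mono_ae_restrict (by norm_num) hint' hint ?_
  have hne : ∀ c : ℝ, ∀ᵐ t : ℝ, t ≠ c := fun c => by
    refine ae_iff.mpr ?_
    simpa using measure_singleton c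
  filter_upwards [ae_restrict_mem measurableSet_Icc, ae_restrict_of_ae (hne 0),
    ae_restrict_of_ae (hne 1)] with t ht ht0 ht1
  have h0 : 0 < t := lt_of_le_of_ne ht.1 (Ne.symm ht0)
  have h1 : t < 1 := lt_of_le_of_ne ht.2 ht1
  have e1 : t ^ (a' - 1) ≤ t ^ (a - 1) :=
    Real.rpow_le_rpow_of_exponent_ge h0 h1.le (by linarith)
  have e2 : (1 - t) ^ (b' - 1) ≤ (1 - t) ^ (b - 1) :=
    Real.rpow_le_rpow_of_exponent_ge (by linarith) (by linarith) (by linarith)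
  exact mul_le_mul e1 e2 (Real.rpow_nonneg (by linarith) _) (Real.rpow_nonneg h0.le _)
open MeasureTheory intervalIntegral Set

set_option maxHeartbeats 2000000 in
/-- The convolution of two generalized power-series densities is again of the
same form, with Cauchy-product coefficients. -/
theorem stmt_2 (θ β₁ β₂ : ℝ) (hθ : 0 < θ) (hβ₁ : 0 < β₁) (hβ₂ : 0 < β₂)
    (η₁ η₂ : ℕ → ℝ)
    (hsum₁ : ∀ x : ℝ, 0 ≤ x →
      Summable fun i : ℕ => |η₁ i| * x ^ (θ * (i : ℝ)) / Real.Gamma (β₁ + θ * i))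
    (hsum₂ : ∀ x : ℝ, 0 ≤ x →
      Summable fun j : ℕ => |η₂ j| * x ^ (θ * (j : ℝ)) / Real.Gamma (β₂ + θ * j))
    (f₁ f₂ : ℝ → ℝ)
    (hf₁ : ∀ u : ℝ, 0 < u →
      f₁ u = ∑' i : ℕ, η₁ i * u ^ (β₁ + θ * (i : ℝ) - 1) / Real.Gamma (β₁ + θ * i))
    (hf₂ : ∀ u : ℝ, 0 < u →
      f₂ u = ∑' j : ℕ, η₂ j * u ^ (β₂ + θ * (j : ℝ) - 1) / Real.Gamma (β₂ + θ * j)) :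
    ∀ x : ℝ, 0 < x →
      ∫ u in (0:ℝ)..x, f₁ u * f₂ (x - u) =
        ∑' k : ℕ, (∑ p ∈ Finset.HasAntidiagonal.antidiagonal k, η₁ p.1 * η₂ p.2) *
          x ^ (β₁ + β₂ + θ * (k : ℝ) - 1) / Real.Gamma (β₁ + β₂ + θ * k) := by
  intro x hx
  have hne : ∀ c : ℝ, ∀ᵐ t : ℝ, t ≠ c := fun c => by
    refine MeasureTheory.ae_iff.mpr ?_
    simpa using measure_singleton c
  set a : ℕ → ℝ := fun i => β₁ + θ * i with ha_def
  set b : ℕ → ℝ := fun j => β₂ + θ * j with hb_def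
  have hai : ∀ i, 0 < a i := fun i =>
    add_pos_of_pos_of_nonneg hβ₁ (mul_nonneg hθ.le (Nat.cast_nonneg i))
  have hbj : ∀ j, 0 < b j := fun j =>
    add_pos_of_pos_of_nonneg hβ₂ (mul_nonneg hθ.le (Nat.cast_nonneg j))
  have hGa : ∀ i, 0 < Real.Gamma (a i) := fun i => Real.Gamma_pos_of_pos (hai i)
  have hGb : ∀ j, 0 < Real.Gamma (b j) := fun j => Real.Gamma_pos_of_pos (hbj j)
  have hGab : ∀ (i j : ℕ), 0 < Real.Gamma (a i + b j) := fun i j =>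
    Real.Gamma_pos_of_pos (add_pos (hai i) (hbj j))
  set F : ℕ × ℕ → ℝ → ℝ := fun p u =>
    η₁ p.1 / Real.Gamma (a p.1) * (η₂ p.2 / Real.Gamma (b p.2)) *
      (u ^ (a p.1 - 1) * (x - u) ^ (b p.2 - 1)) with hF_def
  -- integrability of each term
  have hFint : ∀ p : ℕ × ℕ, Integrable (F p) (volume.restrict (Ioc 0 x)) := by
    intro p
    have h := (intervalIntegrable_iff_integrableOn_Ioc_of_le hx.le).mp
      (beta_integrand_integrable (hai p.1) (hbj p.2) hx)
    exact h.const_mul _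
  -- value of each term
  have hFval : ∀ p : ℕ × ℕ, ∫ u in Ioc (0:ℝ) x, F p u =
      η₁ p.1 * η₂ p.2 * x ^ (a p.1 + b p.2 - 1) / Real.Gamma (a p.1 + b p.2) := by
    intro p
    rw [← intervalIntegral.integral_of_le hx.le]
    have : ∫ u in (0:ℝ)..x, F p u =
        η₁ p.1 / Real.Gamma (a p.1) * (η₂ p.2 / Real.Gamma (b p.2)) *
          ∫ u in (0:ℝ)..x, u ^ (a p.1 - 1) * (x - u) ^ (b p.2 - 1) :=
      intervalIntegral.integral_const_mul _ _
    rw [this, real_beta_scaled (hai p.1) (hbj p.2) hx]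
    have h1 := (hGa p.1).ne'
    have h2 := (hGb p.2).ne'
    have h3 := (hGab p.1 p.2).ne'
    field_simp
  -- integral of the norm of each term
  have hFnorm : ∀ p : ℕ × ℕ, ∫ u in Ioc (0:ℝ) x, ‖F p u‖ =
      |η₁ p.1| * |η₂ p.2| * x ^ (a p.1 + b p.2 - 1) / Real.Gamma (a p.1 + b p.2) := by
    intro p
    have hcong : ∀ u ∈ Ioc (0:ℝ) x, ‖F p u‖ =
        |η₁ p.1| / Real.Gamma (a p.1) * (|η₂ p.2| / Real.Gamma (b p.2)) *
          (u ^ (a p.1 - 1) * (x - u) ^ (b p.2 - 1)) := by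
      intro u hu
      have h1 : (0:ℝ) ≤ u ^ (a p.1 - 1) := Real.rpow_nonneg hu.1.le _
      have h2 : (0:ℝ) ≤ (x - u) ^ (b p.2 - 1) := Real.rpow_nonneg (by linarith [hu.2]) _
      rw [hF_def]
      simp only [Real.norm_eq_abs, abs_mul, abs_div, abs_of_pos (hGa p.1),
        abs_of_pos (hGb p.2), abs_of_nonneg h1, abs_of_nonneg h2]
    rw [setIntegral_congr_fun measurableSet_Ioc hcong, ← intervalIntegral.integral_of_le hx.le]
    have : ∫ u in (0:ℝ)..x,
        |η₁ p.1| / Real.Gamma (a p.1) * (|η₂ p.2| / Real.Gamma (b p.2)) *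
          (u ^ (a p.1 - 1) * (x - u) ^ (b p.2 - 1)) =
        |η₁ p.1| / Real.Gamma (a p.1) * (|η₂ p.2| / Real.Gamma (b p.2)) *
          ∫ u in (0:ℝ)..x, u ^ (a p.1 - 1) * (x - u) ^ (b p.2 - 1) :=
      intervalIntegral.integral_const_mul _ _
    rw [this, real_beta_scaled (hai p.1) (hbj p.2) hx]
    have h1 := (hGa p.1).ne'
    have h2 := (hGb p.2).ne'
    have h3 := (hGab p.1 p.2).ne'
    field_simp
  -- summability of the norms
  have hG : Summable fun p : ℕ × ℕ =>
      |η₁ p.1| * |η₂ p.2| * x ^ (a p.1 + b p.2 - 1) / Real.Gamma (a p.1 + b p.2) := by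
    set C : ℝ := Real.Gamma β₁ * Real.Gamma β₂ / Real.Gamma (β₁ + β₂) * x ^ (β₁ + β₂ - 1)
      with hC_def
    have hs : Summable fun p : ℕ × ℕ =>
        C * ((|η₁ p.1| * x ^ (θ * (p.1 : ℝ)) / Real.Gamma (a p.1)) *
          (|η₂ p.2| * x ^ (θ * (p.2 : ℝ)) / Real.Gamma (b p.2))) := by
      refine Summable.mul_left C ?_
      refine Summable.mul_of_nonneg (hsum₁ x hx.le) (hsum₂ x hx.le) ?_ ?_
      · intro i
        have := hGa i
        positivity
      · intro j
        have := hGb j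
        positivity
    refine Summable.of_nonneg_of_le (fun p => ?_) (fun p => ?_) hs
    · have := hGab p.1 p.2
      positivity
    · -- the key bound
      have hmono := beta_mono hβ₁ hβ₂
        (le_add_of_nonneg_right (mul_nonneg hθ.le (Nat.cast_nonneg p.1)))
        (le_add_of_nonneg_right (mul_nonneg hθ.le (Nat.cast_nonneg p.2)))
      have hxsplit : x ^ (a p.1 + b p.2 - 1) =
          x ^ (β₁ + β₂ - 1) * x ^ (θ * (p.1 : ℝ)) * x ^ (θ * (p.2 : ℝ)) := by
        rw [← Real.rpow_add hx, ← Real.rpow_add hx]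
        congr 1
        simp [ha_def, hb_def]
        ring
      rw [hxsplit]
      have h1 := hGa p.1
      have h2 := hGb p.2
      have h3 := hGab p.1 p.2
      have h4 := Real.Gamma_pos_of_pos (add_pos hβ₁ hβ₂)
      have hbound : Real.Gamma (a p.1) * Real.Gamma (b p.2) / Real.Gamma (a p.1 + b p.2) ≤
          Real.Gamma β₁ * Real.Gamma β₂ / Real.Gamma (β₁ + β₂) := hmono
      rw [hC_def]
      rw [div_le_iff₀ h3] at hbound ⊢
      -- goal : |η₁| |η₂| (x^(β..) x^θi x^θj) ≤ C' * stuff * Γ(a+b)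
      have hx1 : (0:ℝ) ≤ x ^ (β₁ + β₂ - 1) := Real.rpow_nonneg hx.le _
      have hx2 : (0:ℝ) ≤ x ^ (θ * (p.1:ℝ)) := Real.rpow_nonneg hx.le _
      have hx3 : (0:ℝ) ≤ x ^ (θ * (p.2:ℝ)) := Real.rpow_nonneg hx.le _
      have key : |η₁ p.1| * |η₂ p.2| * (x ^ (β₁ + β₂ - 1) * x ^ (θ * (p.1:ℝ)) *
          x ^ (θ * (p.2:ℝ))) * (Real.Gamma (a p.1) * Real.Gamma (b p.2)) ≤
          |η₁ p.1| * |η₂ p.2| * (x ^ (β₁ + β₂ - 1) * x ^ (θ * (p.1:ℝ)) *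
          x ^ (θ * (p.2:ℝ))) * (Real.Gamma β₁ * Real.Gamma β₂ / Real.Gamma (β₁ + β₂) *
            Real.Gamma (a p.1 + b p.2)) := by
        refine mul_le_mul_of_nonneg_left hbound ?_
        positivity
      calc |η₁ p.1| * |η₂ p.2| * (x ^ (β₁ + β₂ - 1) * x ^ (θ * (p.1:ℝ)) * x ^ (θ * (p.2:ℝ)))
          = |η₁ p.1| * |η₂ p.2| * (x ^ (β₁ + β₂ - 1) * x ^ (θ * (p.1:ℝ)) *
            x ^ (θ * (p.2:ℝ))) * (Real.Gamma (a p.1) * Real.Gamma (b p.2)) /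
            (Real.Gamma (a p.1) * Real.Gamma (b p.2)) := by
            field_simp
        _ ≤ _ := by
            rw [div_le_iff₀ (by positivity)]
            calc _ ≤ |η₁ p.1| * |η₂ p.2| * (x ^ (β₁ + β₂ - 1) * x ^ (θ * (p.1:ℝ)) *
                x ^ (θ * (p.2:ℝ))) * (Real.Gamma β₁ * Real.Gamma β₂ / Real.Gamma (β₁ + β₂) *
                  Real.Gamma (a p.1 + b p.2)) := key
              _ = _ := by field_simp
  -- summability of the norm integrals, and termwise integration
  have hsumnorm : Summable fun p : ℕ × ℕ => ∫ u in Ioc (0:ℝ) x, ‖F p u‖ :=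
    hG.congr fun p => (hFnorm p).symm
  have key := MeasureTheory.integral_tsum_of_summable_integral_norm hFint hsumnorm
  -- pointwise identity on the open interval
  have hpt : ∀ u ∈ Ioo (0:ℝ) x, f₁ u * f₂ (x - u) = ∑' p : ℕ × ℕ, F p u := by
    intro u hu
    have hu0 : 0 < u := hu.1
    have hxu : 0 < x - u := by linarith [hu.2]
    have s₁ : Summable fun i : ℕ =>
        ‖η₁ i * u ^ (β₁ + θ * (i:ℝ) - 1) / Real.Gamma (β₁ + θ * i)‖ := by
      refine ((hsum₁ u hu0.le).mul_right (u ^ (β₁ - 1))).congr fun i => ?_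
      rw [Real.norm_eq_abs, abs_div, abs_mul, abs_of_pos (hGa i),
        abs_of_nonneg (Real.rpow_nonneg hu0.le _),
        show β₁ + θ * (i:ℝ) - 1 = θ * (i:ℝ) + (β₁ - 1) by ring,
        Real.rpow_add hu0]
      ring
    have s₂ : Summable fun j : ℕ =>
        ‖η₂ j * (x - u) ^ (β₂ + θ * (j:ℝ) - 1) / Real.Gamma (β₂ + θ * j)‖ := by
      refine ((hsum₂ (x - u) hxu.le).mul_right ((x - u) ^ (β₂ - 1))).congr fun j => ?_
      rw [Real.norm_eq_abs, abs_div, abs_mul, abs_of_pos (hGb j),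
        abs_of_nonneg (Real.rpow_nonneg hxu.le _),
        show β₂ + θ * (j:ℝ) - 1 = θ * (j:ℝ) + (β₂ - 1) by ring,
        Real.rpow_add hxu]
      ring
    rw [hf₁ u hu0, hf₂ (x - u) hxu, tsum_mul_tsum_of_summable_norm s₁ s₂]
    exact tsum_congr fun p => by simp only [hF_def, ha_def, hb_def]; ring
  -- rewrite the left-hand side
  have hLHS : ∫ u in (0:ℝ)..x, f₁ u * f₂ (x - u) =
      ∫ u in Ioc (0:ℝ) x, ∑' p : ℕ × ℕ, F p u := by
    rw [intervalIntegral.integral_of_le hx.le]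
    refine integral_congr_ae ?_
    filter_upwards [ae_restrict_mem measurableSet_Ioc, ae_restrict_of_ae (hne x)]
      with u hu hux
    exact hpt u ⟨hu.1, lt_of_le_of_ne hu.2 hux⟩
  rw [hLHS, ← key, tsum_congr hFval]
  -- regroup the double sum along antidiagonals
  set h : ℕ × ℕ → ℝ := fun p =>
    η₁ p.1 * η₂ p.2 * x ^ (a p.1 + b p.2 - 1) / Real.Gamma (a p.1 + b p.2) with hh_def
  have hh : Summable h := by
    refine Summable.of_abs (hG.congr fun p => ?_)
    rw [hh_def]
    simp only [abs_div, abs_mul, abs_of_pos (hGab p.1 p.2),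
      abs_of_nonneg (Real.rpow_nonneg hx.le _)]
  calc ∑' p : ℕ × ℕ, h p
      = ∑' σ : Σ k : ℕ, Finset.HasAntidiagonal.antidiagonal k, h (Finset.HasAntidiagonal.sigmaAntidiagonalEquivProd σ) :=
        (Finset.HasAntidiagonal.sigmaAntidiagonalEquivProd.tsum_eq h).symm
    _ = ∑' k : ℕ, ∑' p : (Finset.HasAntidiagonal.antidiagonal k : Finset (ℕ × ℕ)), h p :=
        Summable.tsum_sigma' (fun k => (hasSum_fintype _).summable)
          ((Equiv.summable_iff _).mpr hh)
    _ = ∑' k : ℕ, (∑ p ∈ Finset.HasAntidiagonal.antidiagonal k, η₁ p.1 * η₂ p.2) *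
          x ^ (β₁ + β₂ + θ * (k : ℝ) - 1) / Real.Gamma (β₁ + β₂ + θ * k) := by
        refine tsum_congr fun k => ?_
        rw [tsum_fintype, Finset.sum_coe_sort _ h, Finset.sum_mul, Finset.sum_div]
        refine Finset.sum_congr rfl fun p hp => ?_
        have hpk : p.1 + p.2 = k := Finset.HasAntidiagonal.mem_antidiagonal.mp hp
        have hab : a p.1 + b p.2 = β₁ + β₂ + θ * k := by
          simp only [ha_def, hb_def]
          rw [← hpk]
          push_cast
          ring
        rw [hh_def]
        simp only [hab]
end

section
/- Let (δ_i)_{i≥0} be a real sequence and A > 0, D ≥ 0 be constants such that |δ_0| ≤ D and, for every i ≥ 1, δ_i = (1/i)·∑_{h=1}^{i} δ_{i−h}·c_h for some real numbers c_h with |c_h| ≤ A for all h ≥ 1. Then for every i ≥ 1, |δ_i| ≤ (D·A/i!)·(A+1)_{i−1}, where (a)_n = a(a+1)⋯(a+n−1) denotes the Pochhammer symbol, with (a)_0 = 1. -/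
open scoped BigOperators

/-- Majorizing sequence. -/
noncomputable def bb (A D : ℝ) : ℕ → ℝ
  | 0 => D
  | (n+1) => D * A / (Nat.factorial (n+1) : ℝ) * (ascPochhammer ℝ n).eval (A + 1)

lemma bb_nonneg (A D : ℝ) (hA : 0 < A) (hD : 0 ≤ D) (n : ℕ) : 0 ≤ bb A D n := by
  cases n with
  | zero => simpa [bb]
  | succ n =>
    have hp : 0 < (ascPochhammer ℝ n).eval (A + 1) :=
      ascPochhammer_pos n (A + 1) (by linarith)
    have hf : (0:ℝ) < (Nat.factorial (n+1) : ℝ) := by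
      exact_mod_cast Nat.factorial_pos (n+1)
    simp only [bb]
    positivity

lemma bb_id (A D : ℝ) (n : ℕ) :
    A * ∑ ℓ ∈ Finset.range (n+1), bb A D ℓ = ((n:ℝ)+1) * bb A D (n+1) := by
  induction n with
  | zero => simp [bb]; ring
  | succ n ih =>
    rw [Finset.sum_range_succ, mul_add, ih]
    have hf : ((Nat.factorial (n+1) : ℝ)) ≠ 0 := by
      exact_mod_cast Nat.factorial_ne_zero (n+1)
    simp only [bb, ascPochhammer_succ_right, Polynomial.eval_mul, Polynomial.eval_add,
      Polynomial.eval_X, Polynomial.eval_natCast, Nat.factorial_succ (n+1)]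
    push_cast
    field_simp
    ring

/-- Pochhammer bound for the recursively defined coefficients `δ i`
(Appendix B, equation (39)). -/
theorem stmt_5 (δ c : ℕ → ℝ) (A D : ℝ) (hA : 0 < A) (hD : 0 ≤ D)
    (hδ0 : |δ 0| ≤ D)
    (hc : ∀ h : ℕ, 1 ≤ h → |c h| ≤ A)
    (hδ : ∀ i : ℕ, 1 ≤ i →
      δ i = (1 / (i : ℝ)) * ∑ h ∈ Finset.Icc 1 i, δ (i - h) * c h) :
    ∀ i : ℕ, 1 ≤ i →
      |δ i| ≤ D * A / (Nat.factorial i : ℝ) * (ascPochhammer ℝ (i - 1)).eval (A + 1) := by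
  have key : ∀ i : ℕ, |δ i| ≤ bb A D i := by
    intro i
    induction i using Nat.strong_induction_on with
    | _ i ih =>
      match i with
      | 0 => simpa [bb]
      | Nat.succ n =>
        rw [hδ (n+1) (by omega)]
        push_cast
        have hn1 : (0:ℝ) < (n:ℝ) + 1 := by positivity
        have hsum : |∑ h ∈ Finset.Icc 1 (n+1), δ (n+1-h) * c h|
            ≤ ∑ h ∈ Finset.Icc 1 (n+1), bb A D (n+1-h) * A := by
          refine (Finset.abs_sum_le_sum_abs _ _).trans (Finset.sum_le_sum ?_)
          intro h hh
          rw [Finset.mem_Icc] at hh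
          rw [abs_mul]
          exact mul_le_mul (ih (n+1-h) (by omega)) (hc h hh.1) (abs_nonneg _)
            (bb_nonneg A D hA hD _)
        have hre : ∑ h ∈ Finset.Icc 1 (n+1), bb A D (n+1-h)
            = ∑ ℓ ∈ Finset.range (n+1), bb A D ℓ := by
          rw [← Finset.Ico_add_one_right_eq_Icc, Finset.sum_Ico_eq_sum_range]
          have : n + 1 + 1 - 1 = n + 1 := rfl
          rw [this]
          rw [← Finset.sum_range_reflect]
          apply Finset.sum_congr rfl
          intro j hj
          rw [Finset.mem_range] at hj
          congr 1
          omega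
        calc |1 / ((n:ℝ)+1) * ∑ h ∈ Finset.Icc 1 (n+1), δ (n+1-h) * c h|
            ≤ 1 / ((n:ℝ)+1) * ∑ h ∈ Finset.Icc 1 (n+1), bb A D (n+1-h) * A := by
              rw [abs_mul, abs_of_nonneg (by positivity : (0:ℝ) ≤ 1/((n:ℝ)+1))]
              exact mul_le_mul_of_nonneg_left hsum (by positivity)
          _ = 1 / ((n:ℝ)+1) * (A * ∑ ℓ ∈ Finset.range (n+1), bb A D ℓ) := by
              rw [← Finset.sum_mul, hre]; ring
          _ = bb A D (n+1) := by
              rw [bb_id A D n]; field_simp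
  intro i hi
  obtain ⟨n, rfl⟩ : ∃ n, i = n + 1 := ⟨i - 1, by omega⟩
  have := key (n+1)
  simpa [bb] using this
end

section
/- Let θ > 0, β > 0, A > 0, D ≥ 0, and let (δ_i)_{i≥0} be a real sequence with |δ_0| ≤ D such that for every i ≥ 1, δ_i = (1/i)·∑_{h=1}^{i} δ_{i−h}·c_h for some real numbers c_h with |c_h| ≤ A for all h ≥ 1. Then for every x ≥ 0, the series ∑_{i≥0} |δ_i|·x^{θi}/Γ(θi+β) converges. -/
open scoped BigOperators

lemma gamma_summable_aux (θ β R : ℝ) (hθ : 0 < θ) (hβ : 0 < β) (hR : 0 ≤ R) :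
    Summable fun i : ℕ => R ^ i / Real.Gamma (θ * i + β) := by
  set f : ℕ → ℝ := fun i => R ^ i / Real.Gamma (θ * i + β) with hf
  have hfpos : ∀ i : ℕ, 0 ≤ f i := by
    intro i
    have h1 : (0:ℝ) < θ * i + β := by
      have := mul_nonneg hθ.le (Nat.cast_nonneg (α := ℝ) i); linarith
    exact div_nonneg (pow_nonneg hR _) (Real.Gamma_pos_of_pos h1).le
  obtain ⟨m, hm1, hmθ⟩ : ∃ m : ℕ, 1 ≤ m ∧ 1 ≤ θ * m := by
    refine ⟨⌈1/θ⌉₊ + 1, Nat.le_add_left 1 _, ?_⟩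
    have h1 : (1:ℝ)/θ ≤ ((⌈1/θ⌉₊ + 1 : ℕ) : ℝ) := by
      push_cast; linarith [Nat.le_ceil (1/θ)]
    have := (div_le_iff₀ hθ).mp h1
    linarith [this]
  have key : ∀ r : ℕ, Summable fun j : ℕ => f (j * m + r) := by
    intro r
    refine summable_of_ratio_norm_eventually_le (r := 1/2) (by norm_num) ?_
    have hlim : Filter.Tendsto (fun j : ℕ => θ * j) Filter.atTop Filter.atTop :=
      Filter.Tendsto.const_mul_atTop hθ tendsto_natCast_atTop_atTop
    filter_upwards [hlim.eventually_ge_atTop (max 2 (2 * R ^ m))] with j hj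
    set z : ℝ := θ * ((j * m + r : ℕ) : ℝ) + β with hz
    have hjle : (j:ℝ) ≤ ((j * m + r : ℕ) : ℝ) := by
      have : j ≤ j * m + r := le_trans (Nat.le_mul_of_pos_right j (by omega)) (Nat.le_add_right _ _)
      exact_mod_cast this
    have hθj : θ * j ≤ θ * ((j * m + r : ℕ) : ℝ) := mul_le_mul_of_nonneg_left hjle hθ.le
    have hz2 : 2 ≤ z := by
      have := le_trans (le_max_left 2 (2 * R ^ m)) hj; simp only [hz]; linarith
    have hzR : 2 * R ^ m ≤ z := by
      have := le_trans (le_max_right 2 (2 * R ^ m)) hj; simp only [hz]; linarith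
    have hΓz : 0 < Real.Gamma z := Real.Gamma_pos_of_pos (by linarith)
    have hG2 : 0 < Real.Gamma (z + θ * m) := Real.Gamma_pos_of_pos (by
      have : (0:ℝ) ≤ θ * m := by positivity
      linarith)
    have harg : θ * (((j+1) * m + r : ℕ) : ℝ) + β = z + θ * m := by push_cast [hz]; ring
    have hmono : Real.Gamma (z + 1) ≤ Real.Gamma (z + θ * m) := by
      rcases eq_or_lt_of_le hmθ with h | h
      · rw [← h]
      · exact (Real.Gamma_strictMonoOn_Ici (by simp [Set.mem_Ici]; linarith)
          (by simp [Set.mem_Ici]; linarith) (by linarith)).le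
    have h1 : z * Real.Gamma z ≤ Real.Gamma (z + θ * m) := by
      rw [← Real.Gamma_add_one (by linarith : z ≠ 0)]; exact hmono
    have h2 : 2 * R ^ m * Real.Gamma z ≤ Real.Gamma (z + θ * m) := by nlinarith
    have hnn1 : 0 ≤ f ((j+1) * m + r) := hfpos _
    have hnn2 : 0 ≤ f (j * m + r) := hfpos _
    rw [Real.norm_eq_abs, Real.norm_eq_abs, abs_of_nonneg hnn1, abs_of_nonneg hnn2]
    show R ^ ((j+1) * m + r) / Real.Gamma (θ * (((j+1) * m + r : ℕ)) + β) ≤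
      1/2 * (R ^ (j * m + r) / Real.Gamma (θ * ((j * m + r : ℕ)) + β))
    rw [harg, ← hz]
    have hidx : (j+1) * m + r = (j * m + r) + m := by ring
    rw [hidx, pow_add, div_le_iff₀ hG2]
    have hRn : 0 ≤ R ^ (j * m + r) / Real.Gamma z := div_nonneg (pow_nonneg hR _) hΓz.le
    calc R ^ (j * m + r) * R ^ m
        = 1/2 * (R ^ (j * m + r) / Real.Gamma z) * (2 * R ^ m * Real.Gamma z) := by
          field_simp
      _ ≤ 1/2 * (R ^ (j * m + r) / Real.Gamma z) * Real.Gamma (z + θ * m) := by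
          apply mul_le_mul_of_nonneg_left h2 (by positivity)
  haveI : NeZero m := ⟨by omega⟩
  rw [← (Nat.divModEquiv m).symm.summable_iff]
  refine (summable_prod_of_nonneg ?_).mpr ⟨?_, ?_⟩
  · intro p; exact hfpos _
  · intro x
    exact Summable.of_finite
  · have heq : ∀ x : ℕ, ∑' (y : Fin m), (f ∘ (Nat.divModEquiv m).symm) (x, y)
        = ∑ y : Fin m, f (x * m + (y:ℕ)) := by
      intro x; rw [tsum_fintype]; rfl
    simp only [heq]
    exact summable_sum (fun y _ => key (y:ℕ))

/-- Absolute convergence of the sum series `∑ |δ i| x^{θ i} / Γ(θ i + β)` when the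
coefficients satisfy the recursion with uniformly bounded inner coefficients. -/
theorem stmt_7 (θ β A D : ℝ) (hθ : 0 < θ) (hβ : 0 < β) (hA : 0 < A) (hD : 0 ≤ D)
    (δ c : ℕ → ℝ)
    (hδ0 : |δ 0| ≤ D)
    (hc : ∀ h : ℕ, 1 ≤ h → |c h| ≤ A)
    (hδ : ∀ i : ℕ, 1 ≤ i →
      δ i = (1 / (i : ℝ)) * ∑ h ∈ Finset.Icc 1 i, δ (i - h) * c h) :
    ∀ x : ℝ, 0 ≤ x →
      Summable fun i : ℕ => |δ i| * x ^ (θ * (i : ℝ)) / Real.Gamma (θ * i + β) := by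
  intro x hx
  have hA1 : (1:ℝ) ≤ A + 1 := by linarith
  have hA0 : (0:ℝ) ≤ A + 1 := by linarith
  have key : ∀ i : ℕ, |δ i| ≤ D * (A + 1) ^ i := by
    intro i
    induction i using Nat.strong_induction_on with
    | _ i ih =>
      rcases Nat.eq_zero_or_pos i with rfl | hi
      · simpa using hδ0
      · have hi1 : 1 ≤ i := hi
        have hipos : (0:ℝ) < i := by exact_mod_cast hi
        have hsum : |∑ h ∈ Finset.Icc 1 i, δ (i - h) * c h|
            ≤ (i : ℝ) * (D * A * (A + 1) ^ (i - 1)) := by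
          calc |∑ h ∈ Finset.Icc 1 i, δ (i - h) * c h|
              ≤ ∑ h ∈ Finset.Icc 1 i, |δ (i - h) * c h| :=
                Finset.abs_sum_le_sum_abs _ _
            _ ≤ ∑ _h ∈ Finset.Icc 1 i, D * A * (A + 1) ^ (i - 1) := by
                apply Finset.sum_le_sum
                intro h hh
                obtain ⟨hh1, hh2⟩ := Finset.mem_Icc.mp hh
                have hlt : i - h < i := by omega
                have hih := ih (i - h) hlt
                have hch := hc h hh1
                have hpow : (A + 1) ^ (i - h) ≤ (A + 1) ^ (i - 1) :=
                  pow_le_pow_right₀ hA1 (by omega)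
                rw [abs_mul]
                have h1 : |δ (i - h)| * |c h| ≤ (D * (A + 1) ^ (i - h)) * A :=
                  mul_le_mul hih hch (abs_nonneg _) (by positivity)
                have h2 : (D * (A + 1) ^ (i - h)) * A ≤ D * A * (A + 1) ^ (i - 1) := by
                  rw [mul_right_comm]
                  exact mul_le_mul_of_nonneg_left hpow (mul_nonneg hD hA.le)
                linarith
            _ = (i : ℝ) * (D * A * (A + 1) ^ (i - 1)) := by
                rw [Finset.sum_const, Nat.card_Icc]
                simp [nsmul_eq_mul]
        rw [hδ i hi1, abs_mul, abs_of_nonneg (by positivity : (0:ℝ) ≤ 1 / (i:ℝ))]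
        have hb : 1 / (i:ℝ) * |∑ h ∈ Finset.Icc 1 i, δ (i - h) * c h|
            ≤ 1 / (i:ℝ) * ((i : ℝ) * (D * A * (A + 1) ^ (i - 1))) :=
          mul_le_mul_of_nonneg_left hsum (by positivity)
        have heq : 1 / (i:ℝ) * ((i : ℝ) * (D * A * (A + 1) ^ (i - 1)))
            = D * A * (A + 1) ^ (i - 1) := by
          field_simp
        have hfin : D * A * (A + 1) ^ (i - 1) ≤ D * (A + 1) ^ i := by
          have : (A + 1) ^ i = (A + 1) * (A + 1) ^ (i - 1) := by
            conv_lhs => rw [show i = (i - 1) + 1 by omega]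
            rw [pow_succ]; ring
          rw [this]
          nlinarith [pow_nonneg hA0 (i - 1)]
        linarith [hb, heq ▸ hb]
  have hsum := (gamma_summable_aux θ β ((A + 1) * x ^ θ) hθ hβ
    (mul_nonneg hA0 (Real.rpow_nonneg hx θ))).mul_left D
  refine Summable.of_nonneg_of_le (fun i => ?_) (fun i => ?_) hsum
  · have h1 : (0:ℝ) < θ * i + β := by
      have := mul_nonneg hθ.le (Nat.cast_nonneg (α := ℝ) i); linarith
    exact div_nonneg (mul_nonneg (abs_nonneg _) (Real.rpow_nonneg hx _))
      (Real.Gamma_pos_of_pos h1).le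
  · have h1 : (0:ℝ) < θ * i + β := by
      have := mul_nonneg hθ.le (Nat.cast_nonneg (α := ℝ) i); linarith
    have hΓ : 0 < Real.Gamma (θ * i + β) := Real.Gamma_pos_of_pos h1
    have hnum : |δ i| * x ^ (θ * (i:ℝ)) ≤ D * ((A + 1) * x ^ θ) ^ i := by
      have hxp : x ^ (θ * (i:ℝ)) = (x ^ θ) ^ i := by
        rw [Real.rpow_mul hx, Real.rpow_natCast]
      rw [hxp, mul_pow]
      calc |δ i| * (x ^ θ) ^ i
          ≤ D * (A + 1) ^ i * (x ^ θ) ^ i :=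
            mul_le_mul_of_nonneg_right (key i) (pow_nonneg (Real.rpow_nonneg hx θ) i)
        _ = D * ((A + 1) ^ i * (x ^ θ) ^ i) := by ring
    calc |δ i| * x ^ (θ * (i:ℝ)) / Real.Gamma (θ * i + β)
        ≤ D * ((A + 1) * x ^ θ) ^ i / Real.Gamma (θ * i + β) :=
          div_le_div_of_nonneg_right hnum hΓ.le
      _ = D * (((A + 1) * x ^ θ) ^ i / Real.Gamma (θ * i + β)) := by ring
end

section
/- Let θ > 0, ε > 0, K > 0, x ≥ 0 and let t₀ ≥ 2 be an integer. Let (δ_i)_{i≥t₀} be real numbers satisfying |δ_i| ≤ K·Γ(iθ+ε)/Γ(i) for every i ≥ t₀. Then ∑_{i=t₀}^{∞} |δ_i|·x^{θi}/Γ(iθ+ε) ≤ K·x^{θ}·e^{x^{θ}}·γ(t₀−1, x^{θ})/Γ(t₀−1), where γ(a,z) = ∫₀^z t^{a−1}e^{−t}dt is the lower incomplete gamma function. -/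
set_option maxHeartbeats 1000000


open scoped BigOperators Nat
open Finset

lemma exp_tsum (z : ℝ) : Real.exp z = ∑' n : ℕ, z ^ n / n ! := by
  rw [Real.exp_eq_exp_ℝ, NormedSpace.exp_eq_tsum_div]

lemma deriv_aux (n : ℕ) (t : ℝ) :
    HasDerivAt (fun u : ℝ => (n ! : ℝ) * (1 - Real.exp (-u) * ∑ k ∈ range (n + 1), u ^ k / k !))
      (t ^ n * Real.exp (-t)) t := by
  have hS : HasDerivAt (fun u : ℝ => ∑ k ∈ range (n + 1), u ^ k / k !)
      (∑ k ∈ range n, t ^ k / k !) t := by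
    have h1 : HasDerivAt (fun u : ℝ => ∑ k ∈ range (n + 1), u ^ k / k !)
        (∑ k ∈ range (n + 1), (k : ℝ) * t ^ (k - 1) / k !) t := by
      apply HasDerivAt.fun_sum
      intro k _
      exact (hasDerivAt_pow k t).div_const _
    convert h1 using 1
    rw [Finset.sum_range_succ']
    simp only [Nat.cast_zero, zero_mul, zero_div, add_zero]
    apply Finset.sum_congr rfl
    intro k _
    have : ((k + 1 : ℕ) : ℝ) ≠ 0 := by positivity
    field_simp [Nat.factorial_succ]
    simp only [show 1 + k - 1 = k by omega, show 1 + k = k + 1 by omega, Nat.factorial_succ]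
    push_cast
    ring
  have hE : HasDerivAt (fun u : ℝ => Real.exp (-u)) (Real.exp (-t) * (-1)) t :=
    (hasDerivAt_neg t).exp
  have h := (((hE.fun_mul hS).const_sub 1).const_mul (n ! : ℝ))
  refine h.congr_deriv ?_
  rw [Finset.sum_range_succ]
  have hn : (n ! : ℝ) ≠ 0 := by positivity
  field_simp
  ring

lemma integralA (n : ℕ) (z : ℝ) :
    ∫ t in (0:ℝ)..z, t ^ n * Real.exp (-t)
      = n ! * (1 - Real.exp (-z) * ∑ k ∈ range (n + 1), z ^ k / k !) := by
  have h := intervalIntegral.integral_eq_sub_of_hasDerivAt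
    (a := (0:ℝ)) (b := z)
    (f := fun u : ℝ => (n ! : ℝ) * (1 - Real.exp (-u) * ∑ k ∈ range (n + 1), u ^ k / k !))
    (f' := fun t => t ^ n * Real.exp (-t))
    (fun t _ => deriv_aux n t)
    (by apply Continuous.intervalIntegrable; continuity)
  rw [h]
  have h0 : ∑ k ∈ range (n + 1), (0:ℝ) ^ k / k ! = 1 := by
    rw [Finset.sum_eq_single 0]
    · simp
    · intro k _ hk
      simp [zero_pow hk]
    · simp
  simp [h0]

/-- Truncation error bound (Appendix D, equations (13)–(14)): the tail of the
series `∑ δ_i x^{θ i}/Γ(i θ + ε)` beyond index `t₀` is bounded by an explicit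
lower-incomplete-gamma expression. -/
theorem stmt_10 (θ ε K x : ℝ) (hθ : 0 < θ) (hε : 0 < ε) (hK : 0 < K) (hx : 0 ≤ x)
    (t₀ : ℕ) (ht₀ : 2 ≤ t₀) (δ : ℕ → ℝ)
    (hδ : ∀ i : ℕ, t₀ ≤ i →
      |δ i| ≤ K * Real.Gamma ((i : ℝ) * θ + ε) / Real.Gamma (i : ℝ)) :
    (Summable fun i : ℕ =>
      |δ (t₀ + i)| * x ^ (θ * ((t₀ : ℝ) + i)) / Real.Gamma (((t₀ : ℝ) + i) * θ + ε)) ∧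
    ∑' i : ℕ, |δ (t₀ + i)| * x ^ (θ * ((t₀ : ℝ) + i)) / Real.Gamma (((t₀ : ℝ) + i) * θ + ε) ≤
      K * x ^ θ * Real.exp (x ^ θ) *
        (∫ t in (0:ℝ)..(x ^ θ), t ^ (((t₀ : ℝ) - 1) - 1) * Real.exp (-t)) /
          Real.Gamma ((t₀ : ℝ) - 1) := by
  obtain ⟨m, rfl⟩ : ∃ m, t₀ = m + 2 := ⟨t₀ - 2, by omega⟩
  set z := x ^ θ with hzdef
  have hz : 0 ≤ z := Real.rpow_nonneg hx θ
  have hΓa : ∀ i : ℕ, 0 < Real.Gamma ((((m+2:ℕ) : ℝ) + i) * θ + ε) := by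
    intro i
    apply Real.Gamma_pos_of_pos
    have : (0:ℝ) ≤ ((m+2:ℕ) : ℝ) + i := by positivity
    positivity
  have hterm : ∀ i : ℕ,
      |δ (m + 2 + i)| * x ^ (θ * (((m+2:ℕ) : ℝ) + i)) / Real.Gamma ((((m+2:ℕ) : ℝ) + i) * θ + ε)
        ≤ K * z ^ (m + 2 + i) / (m + 1 + i)! := by
    intro i
    have hx1 : x ^ (θ * (((m+2:ℕ) : ℝ) + i)) = z ^ (m + 2 + i) := by
      rw [Real.rpow_mul hx, show (((m+2:ℕ) : ℝ) + i) = ((m + 2 + i : ℕ) : ℝ) by push_cast; ring,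
        Real.rpow_natCast]
    have hΓj : Real.Gamma ((m + 2 + i : ℕ) : ℝ) = (m + 1 + i)! := by
      rw [show ((m + 2 + i : ℕ) : ℝ) = ((m + 1 + i : ℕ) : ℝ) + 1 by push_cast; ring,
        Real.Gamma_nat_eq_factorial]
    have h1 := hδ (m + 2 + i) (Nat.le_add_right _ _)
    rw [show ((m + 2 + i : ℕ) : ℝ) = (((m+2:ℕ) : ℝ) + i) by push_cast; ring] at h1 hΓj
    have hΓapos := hΓa i
    have hΓjpos : (0:ℝ) < (m + 1 + i)! := by positivity
    rw [hx1]
    calc |δ (m + 2 + i)| * z ^ (m + 2 + i) / Real.Gamma ((((m+2:ℕ) : ℝ) + i) * θ + ε)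
        ≤ (K * Real.Gamma ((((m+2:ℕ) : ℝ) + i) * θ + ε) / Real.Gamma (((m+2:ℕ) : ℝ) + i))
            * z ^ (m + 2 + i) / Real.Gamma ((((m+2:ℕ) : ℝ) + i) * θ + ε) := by
          gcongr
      _ = K * z ^ (m + 2 + i) / (m + 1 + i)! := by
          rw [hΓj]
          field_simp
  have hs : Summable (fun j : ℕ => z ^ j / j !) := Real.summable_pow_div_factorial z
  have hg_sum : Summable (fun i : ℕ => K * z ^ (m + 2 + i) / (m + 1 + i)!) := by
    have h2 : Summable (fun i : ℕ => z ^ (i + (m + 1)) / (i + (m + 1))!) :=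
      (summable_nat_add_iff (m + 1)).mpr hs
    apply ((h2.mul_left (K * z)).congr ?_)
    intro i
    rw [show m + 2 + i = (i + (m + 1)) + 1 by omega, show m + 1 + i = i + (m + 1) by omega,
      pow_succ]
    field_simp
  have hL_sum : Summable (fun i : ℕ =>
      |δ (m + 2 + i)| * x ^ (θ * (((m+2:ℕ) : ℝ) + i)) / Real.Gamma ((((m+2:ℕ) : ℝ) + i) * θ + ε)) := by
    apply Summable.of_nonneg_of_le ?_ hterm hg_sum
    intro i
    exact div_nonneg (mul_nonneg (abs_nonneg _) (Real.rpow_nonneg hx _)) (hΓa i).le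
  refine ⟨hL_sum, ?_⟩
  have hle := Summable.tsum_le_tsum hterm hL_sum hg_sum
  refine hle.trans ?_
  -- compute tsum of the bound
  have htail : ∑' i : ℕ, z ^ (i + (m + 1)) / (i + (m + 1))!
      = Real.exp z - ∑ k ∈ range (m + 1), z ^ k / k ! := by
    have := Summable.sum_add_tsum_nat_add (f := fun j : ℕ => z ^ j / j !) (m + 1) hs
    rw [← exp_tsum] at this
    linarith
  have htsum_g : ∑' i : ℕ, K * z ^ (m + 2 + i) / (m + 1 + i)!
      = K * z * (Real.exp z - ∑ k ∈ range (m + 1), z ^ k / k !) := by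
    rw [← htail, ← tsum_mul_left]
    apply tsum_congr
    intro i
    rw [show m + 2 + i = (i + (m + 1)) + 1 by omega, show m + 1 + i = i + (m + 1) by omega,
      pow_succ]
    field_simp
  rw [htsum_g]
  -- compute the RHS
  have hint : (∫ t in (0:ℝ)..z, t ^ ((((m+2:ℕ) : ℝ)) - 1 - 1) * Real.exp (-t))
      = ∫ t in (0:ℝ)..z, t ^ m * Real.exp (-t) := by
    apply intervalIntegral.integral_congr
    intro t _
    show t ^ ((((m+2:ℕ) : ℝ)) - 1 - 1) * Real.exp (-t) = t ^ m * Real.exp (-t)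
    rw [show (((m+2:ℕ) : ℝ)) - 1 - 1 = ((m : ℕ) : ℝ) by push_cast; ring, Real.rpow_natCast]
  have hΓn : Real.Gamma (((m+2:ℕ) : ℝ) - 1) = m ! := by
    rw [show (((m+2:ℕ) : ℝ)) - 1 = ((m : ℕ) : ℝ) + 1 by push_cast; ring,
      Real.Gamma_nat_eq_factorial]
  rw [hint, hΓn, integralA]
  have hm : (0:ℝ) < m ! := by positivity
  have hexp : Real.exp z * Real.exp (-z) = 1 := by
    rw [← Real.exp_add]; simp
  rw [show K * z * Real.exp z * (↑m ! * (1 - Real.exp (-z) * ∑ k ∈ range (m + 1), z ^ k / ↑k !)) / ↑m !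
      = K * z * (Real.exp z - (Real.exp z * Real.exp (-z)) * ∑ k ∈ range (m + 1), z ^ k / ↑k !) by
    field_simp]
  rw [hexp, one_mul]
end

section
/- Let 0 < c < 1, a ∈ ℝ, and b > 0. Then the series ∑_{j≥0} b^j·Γ(c·j + a)/j! converges (where terms are understood for j large enough that c·j + a > 0); in particular lim_{j→∞} b^j·Γ(c·j + a)/j! = 0. -/
open Filter

private lemma gamma_nat_le_pow (n : ℕ) (hn1 : 1 ≤ n) : Real.Gamma (n : ℝ) ≤ (n : ℝ) ^ (n : ℕ) := by
  obtain ⟨m, rfl⟩ : ∃ m, n = m + 1 := ⟨n - 1, by omega⟩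
  have hfe : Real.Gamma ((m : ℝ) + 1) = (Nat.factorial m : ℝ) := Real.Gamma_nat_eq_factorial m
  have hfl : Nat.factorial m ≤ (m + 1) ^ (m + 1) :=
    le_trans (Nat.factorial_le (Nat.le_succ m)) (Nat.factorial_le_pow _)
  push_cast
  rw [hfe]
  exact_mod_cast hfl

/-- For `0 < c < 1` and `b > 0`, the series `∑_j b^j Γ(c j + a)/j!` converges; in
particular its terms tend to `0`. -/
theorem stmt_12 (c a b : ℝ) (hc0 : 0 < c) (hc1 : c < 1) (hb : 0 < b) :
    (Summable fun j : ℕ => b ^ j * Real.Gamma (c * j + a) / (Nat.factorial j : ℝ)) ∧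
    Filter.Tendsto (fun j : ℕ => b ^ j * Real.Gamma (c * j + a) / (Nat.factorial j : ℝ))
      Filter.atTop (nhds 0) := by
  set f : ℕ → ℝ := fun j => b ^ j * Real.Gamma (c * j + a) / (Nat.factorial j : ℝ) with hf
  set c' : ℝ := (c + 1) / 2 with hc'
  have hcc' : c < c' := by rw [hc']; linarith
  have hc'1 : c' < 1 := by rw [hc']; linarith
  have hc'0 : 0 < c' := by rw [hc']; linarith
  have hnat : Tendsto (fun j : ℕ => (j : ℝ)) atTop atTop := tendsto_natCast_atTop_atTop
  have E1 : ∀ᶠ j : ℕ in atTop, (2 : ℝ) ≤ c * j + a := by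
    have h : Tendsto (fun j : ℕ => c * (j : ℝ) + a) atTop atTop :=
      tendsto_atTop_add_const_right _ a (hnat.const_mul_atTop hc0)
    exact h.eventually_ge_atTop 2
  have E2 : ∀ᶠ j : ℕ in atTop, c * j + a + 1 ≤ c' * j := by
    have h := (hnat.const_mul_atTop (by linarith : (0 : ℝ) < c' - c)).eventually_ge_atTop (a + 1)
    filter_upwards [h] with j hj
    nlinarith
  have E3 : ∀ᶠ j : ℕ in atTop, 2 * (b * Real.exp 1) ≤ (j : ℝ) ^ ((1 : ℝ) - c') := by
    have h : Tendsto (fun j : ℕ => (j : ℝ) ^ ((1 : ℝ) - c')) atTop atTop :=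
      (tendsto_rpow_atTop (by linarith : (0 : ℝ) < 1 - c')).comp hnat
    exact h.eventually_ge_atTop _
  have key : ∀ᶠ j : ℕ in atTop, ‖f j‖ ≤ (1 / 2 : ℝ) ^ j := by
    filter_upwards [E1, E2, E3, eventually_ge_atTop 1] with j h1 h2 h3 hj1
    have hjR : (1 : ℝ) ≤ (j : ℝ) := by exact_mod_cast hj1
    have hjpos : (0 : ℝ) < (j : ℝ) := by linarith
    set x := c * j + a with hx
    have hx0 : (0 : ℝ) ≤ x := by linarith
    set n := Nat.ceil x with hn
    have hxn : x ≤ (n : ℝ) := Nat.le_ceil x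
    have hn2 : (2 : ℝ) ≤ (n : ℝ) := le_trans h1 hxn
    have hnle : (n : ℝ) ≤ c' * j := le_of_lt (lt_of_lt_of_le (Nat.ceil_lt_add_one hx0) h2)
    have hc'j1 : (1 : ℝ) ≤ c' * j := by linarith
    have hΓpos : 0 < Real.Gamma x := Real.Gamma_pos_of_pos (by linarith)
    have hΓmono : Real.Gamma x ≤ Real.Gamma (n : ℝ) :=
      Real.Gamma_strictMonoOn_Ici.monotoneOn (Set.mem_Ici.mpr h1) (Set.mem_Ici.mpr hn2) hxn
    have hΓn : Real.Gamma (n : ℝ) ≤ (n : ℝ) ^ (n : ℕ) :=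
      gamma_nat_le_pow n (by exact_mod_cast (by linarith : (1 : ℝ) ≤ (n : ℝ)))
    have hpow : (n : ℝ) ^ (n : ℕ) ≤ (j : ℝ) ^ (c' * (j : ℝ)) := by
      have hn0 : (0 : ℝ) ≤ (n : ℝ) := by linarith
      calc (n : ℝ) ^ (n : ℕ) = (n : ℝ) ^ ((n : ℕ) : ℝ) := (Real.rpow_natCast _ _).symm
        _ ≤ (c' * j) ^ ((n : ℕ) : ℝ) := Real.rpow_le_rpow hn0 hnle (by linarith)
        _ ≤ (c' * j) ^ (c' * (j : ℝ)) :=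
            Real.rpow_le_rpow_of_exponent_le hc'j1 hnle
        _ ≤ (j : ℝ) ^ (c' * (j : ℝ)) :=
            Real.rpow_le_rpow (by linarith) (by nlinarith) (by nlinarith)
    have hΓle : Real.Gamma x ≤ (j : ℝ) ^ (c' * (j : ℝ)) :=
      le_trans hΓmono (le_trans hΓn hpow)
    have hfactpos : (0 : ℝ) < (Nat.factorial j : ℝ) := by positivity
    -- factorial lower bound : j^j ≤ j! * exp j
    have hfact : (j : ℝ) ^ (j : ℕ) ≤ (Nat.factorial j : ℝ) * Real.exp j := by
      have hterm : (j : ℝ) ^ j / (Nat.factorial j : ℝ)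
          ≤ ∑ i ∈ Finset.range (j + 1), (j : ℝ) ^ i / (Nat.factorial i : ℝ) :=
        Finset.single_le_sum (f := fun i => (j : ℝ) ^ i / (Nat.factorial i : ℝ)) (fun i _ => by positivity) (Finset.self_mem_range_succ j)
      have h := le_trans hterm (Real.sum_le_exp_of_nonneg hjpos.le (j + 1))
      rw [div_le_iff₀ hfactpos] at h
      linarith
    -- decompose j^j
    have hA : (j : ℝ) ^ (j : ℕ) =
        (j : ℝ) ^ (c' * (j : ℝ)) * ((j : ℝ) ^ ((1 : ℝ) - c')) ^ (j : ℕ) := by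
      rw [← Real.rpow_natCast ((j : ℝ) ^ ((1 : ℝ) - c')) j, ← Real.rpow_natCast (j : ℝ) j,
        ← Real.rpow_mul hjpos.le, ← Real.rpow_add hjpos]
      congr 1
      ring
    have hexp : Real.exp (j : ℝ) = Real.exp 1 ^ (j : ℕ) := by
      rw [← Real.exp_nat_mul]
      norm_num
    have hgeom : b ^ j * Real.exp 1 ^ j ≤ (1 / 2 : ℝ) ^ j * ((j : ℝ) ^ ((1 : ℝ) - c')) ^ j := by
      have hbe : 0 ≤ b * Real.exp 1 := by positivity
      have h : (b * Real.exp 1) ^ j ≤ (1 / 2 * (j : ℝ) ^ ((1 : ℝ) - c')) ^ j :=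
        pow_le_pow_left₀ hbe (by linarith) j
      rw [mul_pow, mul_pow] at h
      exact h
    have hXpos : (0 : ℝ) < (j : ℝ) ^ (c' * (j : ℝ)) := Real.rpow_pos_of_pos hjpos _
    have hmain : b ^ j * (j : ℝ) ^ (c' * (j : ℝ)) * Real.exp (j : ℝ)
        ≤ (1 / 2 : ℝ) ^ j * (j : ℝ) ^ (j : ℕ) := by
      rw [hA, hexp]
      calc b ^ j * (j : ℝ) ^ (c' * (j : ℝ)) * Real.exp 1 ^ j
          = (j : ℝ) ^ (c' * (j : ℝ)) * (b ^ j * Real.exp 1 ^ j) := by ring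
        _ ≤ (j : ℝ) ^ (c' * (j : ℝ)) * ((1 / 2 : ℝ) ^ j * ((j : ℝ) ^ ((1 : ℝ) - c')) ^ j) :=
            mul_le_mul_of_nonneg_left hgeom hXpos.le
        _ = (1 / 2 : ℝ) ^ j * ((j : ℝ) ^ (c' * (j : ℝ)) * ((j : ℝ) ^ ((1 : ℝ) - c')) ^ j) := by
            ring
    -- combine
    have hbj : (0 : ℝ) ≤ b ^ j := by positivity
    have hfj : f j ≤ (1 / 2 : ℝ) ^ j := by
      have step1 : f j ≤ b ^ j * (j : ℝ) ^ (c' * (j : ℝ)) / (Nat.factorial j : ℝ) := by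
        simp only [hf]
        gcongr
      refine le_trans step1 ?_
      rw [div_le_iff₀ hfactpos]
      have hE : (0 : ℝ) < Real.exp (j : ℝ) := Real.exp_pos _
      have h5 : (1 / 2 : ℝ) ^ j * (j : ℝ) ^ (j : ℕ)
          ≤ (1 / 2 : ℝ) ^ j * ((Nat.factorial j : ℝ) * Real.exp (j : ℝ)) :=
        mul_le_mul_of_nonneg_left hfact (by positivity)
      have h6 : b ^ j * (j : ℝ) ^ (c' * (j : ℝ)) * Real.exp (j : ℝ)
          ≤ (1 / 2 : ℝ) ^ j * (Nat.factorial j : ℝ) * Real.exp (j : ℝ) := by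
        calc b ^ j * (j : ℝ) ^ (c' * (j : ℝ)) * Real.exp (j : ℝ)
            ≤ (1 / 2 : ℝ) ^ j * (j : ℝ) ^ (j : ℕ) := hmain
          _ ≤ (1 / 2 : ℝ) ^ j * ((Nat.factorial j : ℝ) * Real.exp (j : ℝ)) := h5
          _ = (1 / 2 : ℝ) ^ j * (Nat.factorial j : ℝ) * Real.exp (j : ℝ) := by ring
      exact le_of_mul_le_mul_right h6 hE
    have hfnn : 0 ≤ f j := by
      have : (0 : ℝ) < b ^ j := by positivity
      simp only [hf]
      positivity
    rwa [Real.norm_eq_abs, abs_of_nonneg hfnn]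
  have hgeo : Summable (fun j : ℕ => (1 / 2 : ℝ) ^ j) :=
    summable_geometric_of_lt_one (by norm_num) (by norm_num)
  have hsum : Summable f := Summable.of_norm_bounded_eventually_nat hgeo key
  exact ⟨hsum, hsum.tendsto_atTop_zero⟩
end

section
/- Let α > 0, T > 0, r̂ > 0 and let ς be a real number with ς < α·T. Let (φ_i)_{i≥0} be a real sequence such that ∑_{i≥0} |φ_i|·Γ(i+T−ς/α)/Γ(i+T) < ∞. Then ∫₀^∞ r^{−ς}·α·exp(−(r/r̂)^{α})·∑_{i≥0} φ_i·r^{α(i+T)−1}/(r̂^{α(i+T)}·Γ(i+T)) dr = (1/r̂^{ς})·∑_{i≥0} φ_i·Γ(i+T−ς/α)/Γ(i+T), where the integrand's series converges absolutely for almost every r > 0 and the interchange of summation and integration is valid. -/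
open MeasureTheory
open scoped BigOperators

open MeasureTheory Real Set

lemma aux_base {s b : ℝ} (hs : 0 < s) (hb : 0 < b) :
    IntegrableOn (fun y : ℝ => Real.exp (-(b * y)) * y ^ (s - 1)) (Ioi 0) := by
  have h0 := Real.GammaIntegral_convergent hs
  have h1 := (integrableOn_Ioi_comp_mul_left_iff
      (fun x : ℝ => Real.exp (-x) * x ^ (s - 1)) 0 hb).mpr (by simpa using h0)
  have h2 : IntegrableOn (fun x : ℝ => b ^ (s - 1) * (Real.exp (-(b * x)) * x ^ (s - 1)))
      (Ioi 0) := by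
    refine h1.congr_fun (fun x hx => ?_) measurableSet_Ioi
    dsimp only
    rw [Real.mul_rpow hb.le (le_of_lt hx)]
    ring
  have h3 : IntegrableOn
      (fun x : ℝ => (b ^ (s - 1))⁻¹ * (b ^ (s - 1) * (Real.exp (-(b * x)) * x ^ (s - 1))))
      (Ioi 0) := h2.const_mul (b ^ (s - 1))⁻¹
  refine h3.congr_fun (fun x hx => ?_) measurableSet_Ioi
  have : b ^ (s - 1) ≠ 0 := (Real.rpow_pos_of_pos hb _).ne'
  field_simp

lemma aux_integrable {p q b : ℝ} (hp : 0 < p) (hq : -1 < q) (hb : 0 < b) :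
    IntegrableOn (fun x : ℝ => x ^ q * Real.exp (-(b * x ^ p))) (Ioi 0) := by
  have hs : 0 < (q + 1) / p := div_pos (by linarith) hp
  have h := (integrableOn_Ioi_comp_rpow_iff'
      (fun y : ℝ => Real.exp (-(b * y)) * y ^ ((q + 1) / p - 1)) hp.ne').mpr (aux_base hs hb)
  refine h.congr_fun (fun x hx => ?_) measurableSet_Ioi
  have hx' : (0:ℝ) < x := hx
  have e : (x ^ p) ^ ((q + 1) / p - 1) = x ^ (q + 1 - p) := by
    rw [← Real.rpow_mul hx'.le]
    congr 1
    field_simp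
  dsimp only
  rw [smul_eq_mul, e,
    show x ^ (p - 1) * (Real.exp (-(b * x ^ p)) * x ^ (q + 1 - p))
      = x ^ (p - 1) * x ^ (q + 1 - p) * Real.exp (-(b * x ^ p)) by ring,
    ← Real.rpow_add hx', show p - 1 + (q + 1 - p) = q by ring]

lemma key_term (α T rhat ς : ℝ) (hα : 0 < α) (hT : 0 < T) (hr : 0 < rhat)
    (hς : ς < α * T) (a : ℝ) (i : ℕ) :
    IntegrableOn (fun r : ℝ => r ^ (-ς) * α * Real.exp (-(r / rhat) ^ α) *
        (a * r ^ (α * ((i : ℝ) + T) - 1) /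
          (rhat ^ (α * ((i : ℝ) + T)) * Real.Gamma ((i : ℝ) + T)))) (Ioi 0) ∧
    ∫ r in Ioi (0:ℝ), r ^ (-ς) * α * Real.exp (-(r / rhat) ^ α) *
        (a * r ^ (α * ((i : ℝ) + T) - 1) /
          (rhat ^ (α * ((i : ℝ) + T)) * Real.Gamma ((i : ℝ) + T))) =
      a * Real.Gamma ((i : ℝ) + T - ς / α) / (rhat ^ ς * Real.Gamma ((i : ℝ) + T)) := by
  have hμ : (0:ℝ) < (i : ℝ) + T := by positivity
  have hμT : T ≤ (i : ℝ) + T := le_add_of_nonneg_left (Nat.cast_nonneg i)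
  have hq : (-1:ℝ) < α * ((i : ℝ) + T) - ς - 1 := by
    have := mul_le_mul_of_nonneg_left hμT hα.le
    linarith
  have hb : (0:ℝ) < rhat ^ (-α) := Real.rpow_pos_of_pos hr _
  have hΓ : (0:ℝ) < Real.Gamma ((i : ℝ) + T) := Real.Gamma_pos_of_pos hμ
  have hC : (0:ℝ) < rhat ^ (α * ((i : ℝ) + T)) := Real.rpow_pos_of_pos hr _
  have hEq : EqOn
      (fun r : ℝ => r ^ (-ς) * α * Real.exp (-(r / rhat) ^ α) *
        (a * r ^ (α * ((i : ℝ) + T) - 1) /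
          (rhat ^ (α * ((i : ℝ) + T)) * Real.Gamma ((i : ℝ) + T))))
      (fun r : ℝ => (a * α / (rhat ^ (α * ((i : ℝ) + T)) * Real.Gamma ((i : ℝ) + T))) *
        (r ^ (α * ((i : ℝ) + T) - ς - 1) * Real.exp (-(rhat ^ (-α) * r ^ α))))
      (Ioi 0) := by
    intro r hr'
    have hr0 : (0:ℝ) < r := hr'
    have h1 : (r / rhat) ^ α = rhat ^ (-α) * r ^ α := by
      rw [Real.div_rpow hr0.le hr.le, Real.rpow_neg hr.le]
      ring
    have h2 : r ^ (-ς) * r ^ (α * ((i : ℝ) + T) - 1) = r ^ (α * ((i : ℝ) + T) - ς - 1) := by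
      rw [← Real.rpow_add hr0]
      congr 1
      ring
    simp only [h1, ← h2]
    ring
  constructor
  · have hInt : IntegrableOn
        (fun r : ℝ => (a * α / (rhat ^ (α * ((i : ℝ) + T)) * Real.Gamma ((i : ℝ) + T))) *
          (r ^ (α * ((i : ℝ) + T) - ς - 1) * Real.exp (-(rhat ^ (-α) * r ^ α)))) (Ioi 0) :=
      (aux_integrable hα hq hb).const_mul _
    exact hInt.congr_fun hEq.symm measurableSet_Ioi
  · rw [setIntegral_congr_fun measurableSet_Ioi hEq, MeasureTheory.integral_const_mul]
    have hI : ∫ r in Ioi (0:ℝ), r ^ (α * ((i : ℝ) + T) - ς - 1) *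
        Real.exp (-(rhat ^ (-α) * r ^ α)) =
        (rhat ^ (-α)) ^ (-(α * ((i : ℝ) + T) - ς - 1 + 1) / α) * (1 / α) *
          Real.Gamma ((α * ((i : ℝ) + T) - ς - 1 + 1) / α) := by
      simp_rw [← neg_mul]
      exact integral_rpow_mul_exp_neg_mul_rpow hα hq hb
    rw [hI]
    have e1 : (α * ((i : ℝ) + T) - ς - 1 + 1) / α = (i : ℝ) + T - ς / α := by
      field_simp
      ring
    have e2 : (rhat ^ (-α) : ℝ) ^ (-(α * ((i : ℝ) + T) - ς - 1 + 1) / α) =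
        rhat ^ (α * ((i : ℝ) + T)) / rhat ^ ς := by
      rw [← Real.rpow_mul hr.le, ← Real.rpow_sub hr]
      congr 1
      field_simp
      ring
    rw [e1, e2]
    have h1 : rhat ^ ς ≠ 0 := (Real.rpow_pos_of_pos hr _).ne'
    field_simp
open scoped BigOperators ENNReal NNReal

/-- Negative moment of the α-μ mixture distribution (Appendix E, eq. (30)):
`E[R^{-ς}] = (1/r̂^ς) ∑_i φ_i Γ(i+T-ς/α)/Γ(i+T)`, the integrand's series
converging absolutely for almost every `r > 0`. -/
theorem stmt_15 (α T rhat ς : ℝ) (hα : 0 < α) (hT : 0 < T) (hr : 0 < rhat)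
    (hς : ς < α * T) (φ : ℕ → ℝ)
    (hsum : Summable fun i : ℕ =>
      |φ i| * Real.Gamma ((i : ℝ) + T - ς / α) / Real.Gamma ((i : ℝ) + T)) :
    (∀ᵐ r ∂(volume : Measure ℝ), r ∈ Set.Ioi (0:ℝ) →
      Summable fun i : ℕ =>
        |φ i * r ^ (α * ((i : ℝ) + T) - 1) /
          (rhat ^ (α * ((i : ℝ) + T)) * Real.Gamma ((i : ℝ) + T))|) ∧
    ∫ r in Set.Ioi (0:ℝ),
        r ^ (-ς) * α * Real.exp (-(r / rhat) ^ α) *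
          ∑' i : ℕ, φ i * r ^ (α * ((i : ℝ) + T) - 1) /
            (rhat ^ (α * ((i : ℝ) + T)) * Real.Gamma ((i : ℝ) + T)) =
      (1 / rhat ^ ς) *
        ∑' i : ℕ, φ i * Real.Gamma ((i : ℝ) + T - ς / α) / Real.Gamma ((i : ℝ) + T) := by
  have hkey := fun i => key_term α T rhat ς hα hT hr hς (φ i) i
  have hkeyabs := fun i => key_term α T rhat ς hα hT hr hς (|φ i|) i
  have hΓ : ∀ i : ℕ, (0:ℝ) < Real.Gamma ((i:ℝ) + T) :=
    fun i => Real.Gamma_pos_of_pos (by positivity)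
  have hrς : (0:ℝ) < rhat ^ ς := Real.rpow_pos_of_pos hr _
  set F : ℕ → ℝ → ℝ := fun i r =>
    r ^ (-ς) * α * Real.exp (-(r / rhat) ^ α) *
      (φ i * r ^ (α * ((i : ℝ) + T) - 1) /
        (rhat ^ (α * ((i : ℝ) + T)) * Real.Gamma ((i : ℝ) + T))) with hF
  set A : ℕ → ℝ := fun i =>
    |φ i| * Real.Gamma ((i : ℝ) + T - ς / α) / (rhat ^ ς * Real.Gamma ((i : ℝ) + T)) with hA
  have hA_nonneg : ∀ i, 0 ≤ A i := fun i => by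
    have := hΓ i
    have h2 : 0 ≤ Real.Gamma ((i : ℝ) + T - ς / α) := Real.Gamma_nonneg_of_nonneg (by
      have hςα : ς / α < T := by
        rw [div_lt_iff₀ hα]; linarith [mul_comm α T]
      have : (0:ℝ) ≤ (i:ℝ) := Nat.cast_nonneg i
      linarith)
    simp only [hA]
    positivity
  have hA_sum : Summable A := by
    refine (hsum.div_const (rhat ^ ς)).congr fun i => ?_
    simp only [hA]
    rw [div_div, mul_comm (Real.Gamma ((i : ℝ) + T)) (rhat ^ ς)]
  have hmeas : ∀ i, AEStronglyMeasurable (F i) (volume.restrict (Ioi 0)) :=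
    fun i => (hkey i).1.aestronglyMeasurable
  have hlint : ∀ i, (∫⁻ r in Ioi (0:ℝ), ‖F i r‖₊) = ENNReal.ofReal (A i) := by
    intro i
    simp only [← enorm_eq_nnnorm]
    rw [← MeasureTheory.ofReal_integral_norm_eq_lintegral_enorm (hkey i).1]
    congr 1
    simp only [hA]
    rw [← (hkeyabs i).2]
    refine setIntegral_congr_fun measurableSet_Ioi fun r hr' => ?_
    have hr0 : (0:ℝ) < r := hr'
    simp only [hF, Real.norm_eq_abs, abs_mul, abs_div]
    rw [abs_of_pos (Real.rpow_pos_of_pos hr0 (-ς)), abs_of_pos hα,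
      abs_of_pos (Real.exp_pos _), abs_of_pos (Real.rpow_pos_of_pos hr0 _),
      abs_of_pos (Real.rpow_pos_of_pos hr _), abs_of_pos (hΓ i)]
  have htop : (∑' i, ∫⁻ r in Ioi (0:ℝ), ‖F i r‖₊) ≠ ⊤ := by
    rw [tsum_congr hlint, ← ENNReal.ofReal_tsum_of_nonneg hA_nonneg hA_sum]
    exact ENNReal.ofReal_ne_top
  constructor
  · have h0 : ∀ᵐ r ∂(volume.restrict (Ioi (0:ℝ))),
        (∑' i, (‖F i r‖₊ : ℝ≥0∞)) < ⊤ := by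
      refine ae_lt_top' (AEMeasurable.ennreal_tsum fun i => (hmeas i).enorm) ?_
      simp only [← enorm_eq_nnnorm]
      rw [MeasureTheory.lintegral_tsum fun i => (hmeas i).enorm]
      exact htop
    have h1 := (ae_restrict_iff' measurableSet_Ioi).mp h0
    refine h1.mono fun r hfin hmem => ?_
    have hr0 : (0:ℝ) < r := hmem
    have hs1 : Summable fun i => (‖F i r‖₊ : ℝ≥0) :=
      ENNReal.tsum_coe_ne_top_iff_summable.mp (hfin hmem).ne
    have hs3 : Summable fun i => |F i r| := by
      have := NNReal.summable_coe.mpr hs1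
      simpa [Real.norm_eq_abs] using this
    have hc : (0:ℝ) < r ^ (-ς) * α * Real.exp (-(r / rhat) ^ α) := by positivity
    refine (hs3.div_const (r ^ (-ς) * α * Real.exp (-(r / rhat) ^ α))).congr fun i => ?_
    simp only [hF]
    rw [abs_mul, abs_of_pos hc, mul_div_cancel_left₀ _ hc.ne']
  · calc
      ∫ r in Ioi (0:ℝ), r ^ (-ς) * α * Real.exp (-(r / rhat) ^ α) *
          ∑' i : ℕ, φ i * r ^ (α * ((i : ℝ) + T) - 1) /
            (rhat ^ (α * ((i : ℝ) + T)) * Real.Gamma ((i : ℝ) + T))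
          = ∫ r in Ioi (0:ℝ), ∑' i : ℕ, F i r := by
        refine setIntegral_congr_fun measurableSet_Ioi fun r _ => ?_
        simp only [hF]
        exact tsum_mul_left.symm
      _ = ∑' i : ℕ, ∫ r in Ioi (0:ℝ), F i r := integral_tsum hmeas htop
      _ = ∑' i : ℕ, φ i * Real.Gamma ((i : ℝ) + T - ς / α) /
            (rhat ^ ς * Real.Gamma ((i : ℝ) + T)) := tsum_congr fun i => (hkey i).2
      _ = (1 / rhat ^ ς) *
          ∑' i : ℕ, φ i * Real.Gamma ((i : ℝ) + T - ς / α) / Real.Gamma ((i : ℝ) + T) := by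
        rw [← tsum_mul_left]
        refine tsum_congr fun i => ?_
        have := (hΓ i).ne'
        field_simp
end

section
/- Let 0 < α < 1, μ > 0, r̂ > 0 and s > 0. Then ∫₀^∞ e^{−s·r}·(α·μ^{μ}·r^{αμ−1}/(r̂^{αμ}·Γ(μ)))·exp(−μ·(r/r̂)^{α}) dr = (α/Γ(μ))·∑_{j=0}^{∞} ((−1)^j/j!)·Γ(α(μ+j))·(μ/(r̂^{α}·s^{α}))^{μ+j}, and the series on the right converges absolutely. -/
open MeasureTheory
open scoped BigOperators

open Filter Real Set in
private lemma gamma_add_le {x a : ℝ} (hx : 0 < x) (ha0 : 0 < a) (ha1 : a < 1) :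
    Real.Gamma (x + a) ≤ Real.Gamma x * x ^ a := by
  have hΓ := Real.Gamma_pos_of_pos hx
  have h := Real.Gamma_mul_add_mul_le_rpow_Gamma_mul_rpow_Gamma hx
      (by linarith : (0:ℝ) < x + 1) (by linarith : (0:ℝ) < 1 - a) ha0 (by ring)
  rw [show (1 - a) * x + a * (x + 1) = x + a by ring, Real.Gamma_add_one hx.ne'] at h
  calc Real.Gamma (x + a) ≤ Real.Gamma x ^ (1 - a) * (x * Real.Gamma x) ^ a := h
    _ = Real.Gamma x * x ^ a := by
        rw [Real.mul_rpow hx.le hΓ.le, ← mul_assoc, mul_comm (Real.Gamma x ^ (1-a)),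
          mul_assoc, ← Real.rpow_add hΓ]
        norm_num
        ring

open Filter Real Set in
private lemma summable_aux {α μ K : ℝ} (hα0 : 0 < α) (hα1 : α < 1) (hμ : 0 < μ) (hK : 0 < K) :
    Summable (fun j : ℕ => Real.Gamma (α * (μ + j)) * K ^ j / (Nat.factorial j : ℝ)) := by
  set C0 : ℝ := α * (μ + 1) with hC0def
  have hC0 : 0 < C0 := by positivity
  have htend : Tendsto (fun j : ℕ => ((j:ℝ) + 1) ^ (1 - α)) atTop atTop :=
    (tendsto_rpow_atTop (by linarith)).comp
      (tendsto_atTop_add_const_right _ 1 tendsto_natCast_atTop_atTop)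
  refine summable_of_ratio_norm_eventually_le (r := 1/2) (by norm_num) ?_
  filter_upwards [htend.eventually_ge_atTop (2 * K * C0 ^ α)] with j hj
  have hx : 0 < α * (μ + j) := by positivity
  have hj1 : (0:ℝ) < (j:ℝ) + 1 := by positivity
  have hΓx := Real.Gamma_pos_of_pos hx
  have hΓx1 := Real.Gamma_pos_of_pos (show (0:ℝ) < α * (μ + (j+1:ℕ)) by positivity)
  have hargs : α * (μ + ((j+1:ℕ):ℝ)) = α * (μ + j) + α := by push_cast; ring
  -- bound on the Gamma ratio
  have key : Real.Gamma (α * (μ + ((j+1:ℕ):ℝ))) ≤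
      Real.Gamma (α * (μ + j)) * (C0 ^ α * ((j:ℝ) + 1) ^ α) := by
    rw [hargs]
    refine (gamma_add_le hx hα0 hα1).trans ?_
    have h1 : (α * (μ + j)) ^ α ≤ (C0 * ((j:ℝ)+1)) ^ α := by
      apply Real.rpow_le_rpow hx.le _ hα0.le
      rw [hC0def]
      nlinarith [mul_nonneg (mul_nonneg hα0.le hμ.le) (Nat.cast_nonneg (α := ℝ) j)]
    rw [Real.mul_rpow hC0.le hj1.le] at h1
    exact mul_le_mul_of_nonneg_left h1 hΓx.le
  -- bound on the extra factor
  have key2 : C0 ^ α * ((j:ℝ) + 1) ^ α * K ≤ ((j:ℝ) + 1) / 2 := by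
    have h2 : 2 * K * C0 ^ α * ((j:ℝ)+1) ^ α ≤ ((j:ℝ)+1) ^ (1-α) * ((j:ℝ)+1) ^ α :=
      mul_le_mul_of_nonneg_right hj (Real.rpow_nonneg hj1.le _)
    rw [← Real.rpow_add hj1] at h2
    norm_num at h2
    linarith
  have hpos1 : (0:ℝ) < Real.Gamma (α * (μ + ((j+1:ℕ):ℝ))) * K ^ (j+1) / (Nat.factorial (j+1) : ℝ) := by
    positivity
  have hpos2 : (0:ℝ) < Real.Gamma (α * (μ + (j:ℝ))) * K ^ j / (Nat.factorial j : ℝ) := by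
    positivity
  rw [Real.norm_eq_abs, Real.norm_eq_abs, abs_of_pos hpos1, abs_of_pos hpos2]
  have hfac : ((Nat.factorial (j+1) : ℝ)) = ((j:ℝ)+1) * (Nat.factorial j : ℝ) := by
    push_cast [Nat.factorial_succ]; ring
  have hfj : (0:ℝ) < (Nat.factorial j : ℝ) := by positivity
  calc Real.Gamma (α * (μ + ((j+1:ℕ):ℝ))) * K ^ (j+1) / (Nat.factorial (j+1) : ℝ)
      ≤ (Real.Gamma (α * (μ + j)) * (C0 ^ α * ((j:ℝ) + 1) ^ α)) * (K ^ j * K) /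
          (((j:ℝ)+1) * (Nat.factorial j : ℝ)) := by
        rw [hfac, pow_succ]
        gcongr
    _ = (Real.Gamma (α * (μ + j)) * K ^ j / (Nat.factorial j : ℝ)) *
          ((C0 ^ α * ((j:ℝ) + 1) ^ α * K) / ((j:ℝ)+1)) := by
        field_simp
    _ ≤ (Real.Gamma (α * (μ + j)) * K ^ j / (Nat.factorial j : ℝ)) * (1/2) := by
        refine mul_le_mul_of_nonneg_left ?_ hpos2.le
        rw [div_le_iff₀ hj1]
        linarith [key2]
    _ = 1/2 * (Real.Gamma (α * (μ + (j:ℝ))) * K ^ j / (Nat.factorial j : ℝ)) := by ring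

/-- Series expansion of the Laplace transform of the α-μ density for `0 < α < 1`
(Appendix E, single-component case), together with absolute convergence of the
series. -/
theorem stmt_16 (α μ rhat s : ℝ) (hα0 : 0 < α) (hα1 : α < 1) (hμ : 0 < μ)
    (hr : 0 < rhat) (hs : 0 < s) :
    (∫ r in Set.Ioi (0:ℝ),
        Real.exp (-(s * r)) *
          (α * μ ^ μ * r ^ (α * μ - 1) / (rhat ^ (α * μ) * Real.Gamma μ)) *
            Real.exp (-μ * (r / rhat) ^ α) =
      (α / Real.Gamma μ) *
        ∑' j : ℕ, ((-1 : ℝ) ^ j / (Nat.factorial j : ℝ)) *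
          Real.Gamma (α * (μ + j)) * (μ / (rhat ^ α * s ^ α)) ^ (μ + (j : ℝ))) ∧
    Summable fun j : ℕ =>
      |((-1 : ℝ) ^ j / (Nat.factorial j : ℝ)) * Real.Gamma (α * (μ + j)) *
        (μ / (rhat ^ α * s ^ α)) ^ (μ + (j : ℝ))| := by
  have hΓμ : 0 < Real.Gamma μ := Real.Gamma_pos_of_pos hμ
  set K : ℝ := μ / (rhat ^ α * s ^ α) with hKdef
  have hK : 0 < K := by positivity
  have hsum := summable_aux (K := K) hα0 hα1 hμ hK
  have habs : ∀ j : ℕ,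
      |((-1 : ℝ) ^ j / (Nat.factorial j : ℝ)) * Real.Gamma (α * (μ + j)) *
        K ^ (μ + (j : ℝ))| =
      K ^ μ * (Real.Gamma (α * (μ + j)) * K ^ j / (Nat.factorial j : ℝ)) := by
    intro j
    have hΓj : 0 < Real.Gamma (α * (μ + j)) := Real.Gamma_pos_of_pos (by positivity)
    rw [abs_mul, abs_mul, abs_div, abs_pow, abs_neg, abs_one, one_pow,
      Nat.abs_cast, abs_of_pos hΓj, abs_of_pos (Real.rpow_pos_of_pos hK _),
      Real.rpow_add hK, Real.rpow_natCast]
    ring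
  constructor
  · -- Laplace integral of a power
    have key : ∀ a : ℝ, 0 < a →
        (∫ r in Set.Ioi (0:ℝ), Real.exp (-(s*r)) * r ^ (a-1)) = Real.Gamma a / s ^ a := by
      intro a ha
      calc (∫ r in Set.Ioi (0:ℝ), Real.exp (-(s*r)) * r ^ (a-1))
          = ∫ r in Set.Ioi (0:ℝ), r ^ (a-1) * Real.exp (-s * r ^ (1:ℝ)) := by
            refine setIntegral_congr_fun measurableSet_Ioi (fun x hx => ?_)
            rw [Real.rpow_one, neg_mul, mul_comm]
        _ = s ^ (-(a-1+1)/1) * (1/1) * Real.Gamma ((a-1+1)/1) :=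
            integral_rpow_mul_exp_neg_mul_rpow one_pos (by linarith) hs
        _ = Real.Gamma a / s ^ a := by
            rw [show -(a-1+1)/1 = -a by ring, show (a-1+1)/1 = a by ring,
              Real.rpow_neg hs.le]
            ring
    have keyInt : ∀ a : ℝ, 0 < a →
        IntegrableOn (fun r : ℝ => Real.exp (-(s*r)) * r ^ (a-1)) (Set.Ioi 0) := by
      intro a ha
      have h := integrableOn_rpow_mul_exp_neg_mul_rpow (s := a-1) (p := 1) (b := s)
        (by linarith) one_pos hs
      refine h.congr_fun (fun x hx => ?_) measurableSet_Ioi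
      beta_reduce
      rw [Real.rpow_one, neg_mul, mul_comm]
    set c : ℝ := α * μ ^ μ / (rhat ^ (α*μ) * Real.Gamma μ) with hcdef
    set d : ℝ := μ / rhat ^ α with hddef
    have hc : 0 < c := by rw [hcdef]; positivity
    have hd : 0 < d := by rw [hddef]; positivity
    set F : ℕ → ℝ → ℝ := fun j r =>
      (c * (-d) ^ j / (Nat.factorial j : ℝ)) *
        (Real.exp (-(s*r)) * r ^ (α*(μ+j) - 1)) with hFdef
    have hFint : ∀ j : ℕ, IntegrableOn (F j) (Set.Ioi 0) := fun j =>
      (keyInt _ (by positivity)).const_mul _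
    have hFval : ∀ j : ℕ, (∫ r in Set.Ioi (0:ℝ), F j r) =
        (c * (-d) ^ j / (Nat.factorial j : ℝ)) *
          (Real.Gamma (α*(μ+j)) / s ^ (α*(μ+j))) := by
      intro j
      simp only [hFdef]
      rw [integral_const_mul, key _ (by positivity)]
    have hFnorm : ∀ j : ℕ, (∫ r in Set.Ioi (0:ℝ), ‖F j r‖) =
        (c * d ^ j / (Nat.factorial j : ℝ)) *
          (Real.Gamma (α*(μ+j)) / s ^ (α*(μ+j))) := by
      intro j
      calc (∫ r in Set.Ioi (0:ℝ), ‖F j r‖)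
          = ∫ r in Set.Ioi (0:ℝ), (c * d ^ j / (Nat.factorial j : ℝ)) *
              (Real.exp (-(s*r)) * r ^ (α*(μ+j) - 1)) := by
            refine setIntegral_congr_fun measurableSet_Ioi (fun x hx => ?_)
            have hxp : (0:ℝ) < x := hx
            simp only [hFdef]
            rw [Real.norm_eq_abs, abs_mul, abs_div, abs_mul, abs_pow, abs_neg,
              abs_of_pos hc, abs_of_pos hd, Nat.abs_cast,
              abs_of_pos (by positivity : (0:ℝ) < Real.exp (-(s*x)) * x ^ (α*(μ+j) - 1))]
        _ = (c * d ^ j / (Nat.factorial j : ℝ)) *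
              (Real.Gamma (α*(μ+j)) / s ^ (α*(μ+j))) := by
            rw [integral_const_mul, key _ (by positivity)]
    have hsexpand : ∀ j : ℕ, s ^ (α*(μ+(j:ℝ))) = s ^ (α*μ) * (s^α)^j := by
      intro j
      rw [mul_add, Real.rpow_add hs]
      congr 1
      rw [Real.rpow_mul hs.le, Real.rpow_natCast]
    have hKj : ∀ j : ℕ, K ^ j = d ^ j / (s^α)^j := by
      intro j
      rw [← div_pow]
      congr 1
      rw [hKdef, hddef, div_div]
    have hsumnorm : Summable (fun j : ℕ => ∫ r in Set.Ioi (0:ℝ), ‖F j r‖) := by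
      refine Summable.congr (hsum.mul_left (c / s ^ (α*μ))) (fun j => ?_)
      rw [hFnorm j, hsexpand j]
      have hΓj : 0 < Real.Gamma (α * (μ + j)) := Real.Gamma_pos_of_pos (by positivity)
      have hsa : (0:ℝ) < s ^ α := by positivity
      have hsam : (0:ℝ) < s ^ (α*μ) := by positivity
      have hfj : (0:ℝ) < (Nat.factorial j : ℝ) := by positivity
      rw [hKj j]
      field_simp
    have hinter := MeasureTheory.integral_tsum_of_summable_integral_norm hFint hsumnorm
    have hpt : ∀ r ∈ Set.Ioi (0:ℝ), (∑' j : ℕ, F j r) =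
        Real.exp (-(s * r)) *
          (α * μ ^ μ * r ^ (α * μ - 1) / (rhat ^ (α * μ) * Real.Gamma μ)) *
            Real.exp (-μ * (r / rhat) ^ α) := by
      intro r hr0
      have hrp : (0:ℝ) < r := hr0
      have hexp : Real.exp (-μ * (r/rhat)^α) =
          ∑' j : ℕ, (-μ * (r/rhat)^α)^j / (Nat.factorial j : ℝ) := by
        rw [Real.exp_eq_exp_ℝ, NormedSpace.exp_eq_tsum_div]
      rw [hexp, ← tsum_mul_left]
      refine tsum_congr (fun j => ?_)
      simp only [hFdef]
      have h1 : (-μ * (r/rhat)^α) = (-d) * r^α := by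
        rw [hddef, Real.div_rpow hrp.le hr.le]
        field_simp
      rw [h1, mul_pow, ← Real.rpow_natCast (r^α) j, ← Real.rpow_mul hrp.le]
      have h2 : r ^ (α*(μ+(j:ℝ)) - 1) = r ^ (α*μ - 1) * r ^ (α*(j:ℝ)) := by
        rw [← Real.rpow_add hrp]
        ring_nf
      rw [h2, hcdef]
      have hfj : (0:ℝ) < (Nat.factorial j : ℝ) := by positivity
      field_simp
    calc (∫ r in Set.Ioi (0:ℝ),
            Real.exp (-(s * r)) *
              (α * μ ^ μ * r ^ (α * μ - 1) / (rhat ^ (α * μ) * Real.Gamma μ)) *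
                Real.exp (-μ * (r / rhat) ^ α))
        = ∫ r in Set.Ioi (0:ℝ), ∑' j : ℕ, F j r :=
          setIntegral_congr_fun measurableSet_Ioi (fun r hr => (hpt r hr).symm)
      _ = ∑' j : ℕ, ∫ r in Set.Ioi (0:ℝ), F j r := hinter.symm
      _ = (α / Real.Gamma μ) *
            ∑' j : ℕ, ((-1 : ℝ) ^ j / (Nat.factorial j : ℝ)) *
              Real.Gamma (α * (μ + j)) * K ^ (μ + (j : ℝ)) := by
          rw [← tsum_mul_left]
          refine tsum_congr (fun j => ?_)
          rw [hFval j]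
          have hΓj : 0 < Real.Gamma (α * (μ + j)) := Real.Gamma_pos_of_pos (by positivity)
          have e1 : K ^ (μ+(j:ℝ)) = K^μ * K^j := by
            rw [Real.rpow_add hK, Real.rpow_natCast]
          have e2 : K ^ μ = μ^μ / (rhat^(α*μ) * s^(α*μ)) := by
            rw [hKdef, Real.div_rpow hμ.le (by positivity),
              Real.mul_rpow (by positivity) (by positivity),
              ← Real.rpow_mul hr.le, ← Real.rpow_mul hs.le]
          have e5 : (-d)^j = (-1:ℝ)^j * d^j := by rw [neg_pow]
          rw [e1, e2, hKj j, hsexpand j, e5, hcdef]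
          have hsa : (0:ℝ) < s ^ α := by positivity
          have hsam : (0:ℝ) < s ^ (α*μ) := by positivity
          have hram : (0:ℝ) < rhat ^ (α*μ) := by positivity
          have hfj : (0:ℝ) < (Nat.factorial j : ℝ) := by positivity
          field_simp
  · exact Summable.congr ((hsum.mul_left (K ^ μ))) (fun j => (habs j).symm)
end

section
/- Let 0 < α < 1, T > 0, r̂ > 0, s > 0 and let (φ_i)_{i≥0} be a real sequence such that ∑_{i≥0}∑_{j≥0} |φ_i|·Γ(α(i+j+T))·(r̂·s)^{−α(i+j)}/(Γ(i+T)·j!) < ∞. Let f(r) = α·exp(−(r/r̂)^{α})·∑_{i≥0} φ_i·r^{α(i+T)−1}/(r̂^{α(i+T)}·Γ(i+T)) for r > 0. Then ∫₀^∞ e^{−s·r}·f(r) dr = (α/r̂^{αT})·∑_{k=0}^{∞} λ_k·s^{−α(k+T)}, where λ_k = (Γ(α(k+T))/r̂^{αk})·∑_{j=0}^{k} (−1)^{k−j}·φ_j/((k−j)!·Γ(j+T)). -/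
open MeasureTheory
open scoped BigOperators

lemma aux_exp_tsum (y : ℝ) : Real.exp y = ∑' n : ℕ, y ^ n / n.factorial := by
  rw [Real.exp_eq_exp_ℝ, NormedSpace.exp_eq_tsum_div]

lemma aux_diag {G : ℕ × ℕ → ℝ} (hG : Summable G) :
    ∑' p : ℕ × ℕ, G p = ∑' n : ℕ, ∑ kl ∈ Finset.HasAntidiagonal.antidiagonal n, G kl := by
  have h1 : ∀ n : ℕ, ∑ kl ∈ Finset.HasAntidiagonal.antidiagonal n, G kl
      = ∑' (kl : (Finset.HasAntidiagonal.antidiagonal n : Finset (ℕ × ℕ))), G kl :=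
    fun n => (Finset.tsum_subtype _ _).symm
  rw [tsum_congr h1, ← Finset.HasAntidiagonal.sigmaAntidiagonalEquivProd.tsum_eq G]
  exact Summable.tsum_sigma (Finset.HasAntidiagonal.sigmaAntidiagonalEquivProd.summable_iff.mpr hG)

lemma aux_gamma {Q1 x : ℝ} (hQ : 1 ≤ Q1) (hx : 0 < x) :
    Q1 ^ x ≤ (6 * Q1 ^ (3 : ℕ) * Real.exp Q1) * Real.Gamma x := by
  have hQ0 : (0:ℝ) < Q1 := lt_of_lt_of_le one_pos hQ
  have hexp1 : (1:ℝ) ≤ Real.exp Q1 := Real.one_le_exp (by linarith)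
  have hg : (0:ℝ) < Real.Gamma x := Real.Gamma_pos_of_pos hx
  rcases le_or_gt 2 x with h2 | h2
  · set m : ℕ := ⌊x⌋₊ - 2 with hm
    have hfl2 : 2 ≤ ⌊x⌋₊ := Nat.le_floor (by exact_mod_cast h2)
    have hfl : (m + 2 : ℕ) = ⌊x⌋₊ := by omega
    have hm2 : ((m : ℝ) + 2) ≤ x := by
      have h := Nat.floor_le (by linarith : (0:ℝ) ≤ x)
      have : ((m + 2 : ℕ) : ℝ) ≤ x := by rw [hfl]; exact h
      push_cast at this; linarith
    have hx3 : x ≤ (m : ℝ) + 3 := by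
      have h := (Nat.lt_floor_add_one x).le
      have : x ≤ ((m + 2 : ℕ) : ℝ) + 1 := by rw [hfl]; exact h
      push_cast at this; linarith
    have hgam : ((m + 1).factorial : ℝ) ≤ Real.Gamma x := by
      have h1 : Real.Gamma ((m : ℝ) + 2) ≤ Real.Gamma x := by
        rcases eq_or_lt_of_le hm2 with h | h
        · rw [h]
        · exact (Real.Gamma_strictMonoOn_Ici (by simp : ((m:ℝ)+2) ∈ Set.Ici (2:ℝ))
            (by simp only [Set.mem_Ici]; linarith) h).le
      have h2' : Real.Gamma ((m : ℝ) + 2) = ((m + 1).factorial : ℝ) := by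
        have := Real.Gamma_nat_eq_factorial (m + 1)
        push_cast at this ⊢
        rw [← this]; ring_nf
      linarith
    have hQm : Q1 ^ m ≤ Real.exp Q1 * (m + 1).factorial := by
      have h1 := Real.pow_div_factorial_le_exp Q1 (by linarith : (0:ℝ) ≤ Q1) m
      have h2' : (0:ℝ) < m.factorial := by exact_mod_cast m.factorial_pos
      have h3 : (m.factorial : ℝ) ≤ ((m+1).factorial : ℝ) := by
        exact_mod_cast Nat.factorial_le (Nat.le_succ m)
      have := (div_le_iff₀ h2').mp h1
      nlinarith [Real.exp_pos Q1]
    calc Q1 ^ x ≤ Q1 ^ ((m : ℝ) + 3) := Real.rpow_le_rpow_of_exponent_le hQ hx3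
      _ = Q1 ^ (m + 3 : ℕ) := by rw [← Real.rpow_natCast]; push_cast; ring_nf
      _ = Q1 ^ (3:ℕ) * Q1 ^ m := by rw [pow_add]; ring
      _ ≤ Q1 ^ (3:ℕ) * (Real.exp Q1 * (m + 1).factorial) := by
          apply mul_le_mul_of_nonneg_left hQm (by positivity)
      _ ≤ Q1 ^ (3:ℕ) * (Real.exp Q1 * Real.Gamma x) := by
          apply mul_le_mul_of_nonneg_left (by nlinarith [Real.exp_pos Q1]) (by positivity)
      _ ≤ (6 * Q1 ^ (3:ℕ) * Real.exp Q1) * Real.Gamma x := by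
          nlinarith [mul_pos (mul_pos (pow_pos hQ0 3) (Real.exp_pos Q1)) hg]
  · -- x < 2
    have hg16 : (1:ℝ)/6 ≤ Real.Gamma x := by
      have hne : x ≠ 0 := ne_of_gt hx
      have hne1 : x + 1 ≠ 0 := by linarith
      have e1 : Real.Gamma (x + 1 + 1) = (x+1) * (x * Real.Gamma x) := by
        rw [Real.Gamma_add_one hne1, Real.Gamma_add_one hne]
      have h2' : Real.Gamma 2 ≤ Real.Gamma (x + 1 + 1) := by
        rcases eq_or_lt_of_le (by linarith : (2:ℝ) ≤ x + 1 + 1) with h | h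
        · rw [← h]
        · exact (Real.Gamma_strictMonoOn_Ici (by norm_num)
            (by simp only [Set.mem_Ici]; linarith) h).le
      rw [Real.Gamma_two, e1] at h2'
      nlinarith [mul_le_mul_of_nonneg_right
        (show (x+1)*x ≤ 6 by nlinarith) hg.le]
    have hQx : Q1 ^ x ≤ Q1 ^ (2:ℕ) := by
      have h := Real.rpow_le_rpow_of_exponent_le hQ h2.le
      rwa [show ((2:ℝ) = ((2:ℕ):ℝ)) by norm_num, Real.rpow_natCast] at h
    calc Q1 ^ x ≤ Q1 ^ (2:ℕ) := hQx
      _ ≤ Q1 ^ (3:ℕ) := pow_le_pow_right₀ hQ (by norm_num)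
      _ ≤ Q1 ^ (3:ℕ) * Real.exp Q1 := le_mul_of_one_le_right (by positivity) hexp1
      _ = (Q1 ^ (3:ℕ) * Real.exp Q1) * (6 * (1/6)) := by ring
      _ ≤ (Q1 ^ (3:ℕ) * Real.exp Q1) * (6 * Real.Gamma x) := by
          apply mul_le_mul_of_nonneg_left (by linarith) (by positivity)
      _ = (6 * Q1 ^ (3:ℕ) * Real.exp Q1) * Real.Gamma x := by ring

/-- Laplace transform of the α-μ mixture density for `0 < α < 1`
(Appendix E, equations (21)–(23), (36)–(37)): it is a single power series in
`s^{-α}` whose coefficients `λ_k` are finite alternating sums. -/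
theorem stmt_17 (α T rhat s : ℝ) (hα0 : 0 < α) (hα1 : α < 1) (hT : 0 < T)
    (hr : 0 < rhat) (hs : 0 < s) (φ : ℕ → ℝ)
    (hsum : Summable fun p : ℕ × ℕ =>
      |φ p.1| * Real.Gamma (α * ((p.1 : ℝ) + p.2 + T)) *
        (rhat * s) ^ (-(α * ((p.1 : ℝ) + p.2))) /
          (Real.Gamma ((p.1 : ℝ) + T) * (Nat.factorial p.2 : ℝ)))
    (f : ℝ → ℝ)
    (hf : ∀ r : ℝ, 0 < r →
      f r = α * Real.exp (-(r / rhat) ^ α) *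
        ∑' i : ℕ, φ i * r ^ (α * ((i : ℝ) + T) - 1) /
          (rhat ^ (α * ((i : ℝ) + T)) * Real.Gamma ((i : ℝ) + T))) :
    ∫ r in Set.Ioi (0:ℝ), Real.exp (-(s * r)) * f r =
      (α / rhat ^ (α * T)) *
        ∑' k : ℕ,
          ((Real.Gamma (α * ((k : ℝ) + T)) / rhat ^ (α * (k : ℝ))) *
            ∑ j ∈ Finset.range (k + 1),
              (-1 : ℝ) ^ (k - j) * φ j /
                ((Nat.factorial (k - j) : ℝ) * Real.Gamma ((j : ℝ) + T))) *
          s ^ (-(α * ((k : ℝ) + T))) := by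
  set W : ℕ × ℕ → ℝ := fun p : ℕ × ℕ =>
      |φ p.1| * Real.Gamma (α * ((p.1 : ℝ) + p.2 + T)) *
        (rhat * s) ^ (-(α * ((p.1 : ℝ) + p.2))) /
          (Real.Gamma ((p.1 : ℝ) + T) * (Nat.factorial p.2 : ℝ)) with hWdef
  set e2 : ℕ × ℕ → ℝ := fun p => α * ((p.1 : ℝ) + p.2 + T) with he2def
  set C : ℕ × ℕ → ℝ := fun p =>
      α * φ p.1 * (-1 : ℝ) ^ p.2 /
        (rhat ^ e2 p * Real.Gamma ((p.1 : ℝ) + T) * (Nat.factorial p.2 : ℝ)) with hCdef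
  set F : ℕ × ℕ → ℝ → ℝ := fun p r =>
      C p * (r ^ (e2 p - 1) * Real.exp (-(s * r))) with hFdef
  have hrs : (0:ℝ) < rhat * s := mul_pos hr hs
  have he2 : ∀ p : ℕ × ℕ, 0 < e2 p := by
    intro p
    have h1 : (0:ℝ) ≤ (p.1 : ℝ) + p.2 := by positivity
    simp only [he2def]
    exact mul_pos hα0 (by linarith)
  have hGpos : ∀ i : ℕ, 0 < Real.Gamma ((i : ℝ) + T) := by
    intro i
    apply Real.Gamma_pos_of_pos
    have : (0:ℝ) ≤ (i : ℝ) := Nat.cast_nonneg i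
    linarith
  have hfacpos : ∀ j : ℕ, (0:ℝ) < (Nat.factorial j : ℝ) := by
    intro j; exact_mod_cast j.factorial_pos
  have habsC : ∀ p : ℕ × ℕ, |C p| =
      α * |φ p.1| / (rhat ^ e2 p * Real.Gamma ((p.1 : ℝ) + T) * (Nat.factorial p.2 : ℝ)) := by
    intro p
    have hden : (0:ℝ) < rhat ^ e2 p * Real.Gamma ((p.1 : ℝ) + T) * (Nat.factorial p.2 : ℝ) :=
      mul_pos (mul_pos (Real.rpow_pos_of_pos hr _) (hGpos p.1)) (hfacpos p.2)
    simp only [hCdef]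
    rw [abs_div, abs_mul, abs_mul, abs_of_pos hα0, abs_pow, abs_neg, abs_one, one_pow, mul_one,
      abs_of_pos hden]
  set κ : ℝ := α * (rhat * s) ^ (-(α * T)) with hκdef
  have hval : ∀ p : ℕ × ℕ,
      |C p| * ((1/s) ^ e2 p * Real.Gamma (e2 p)) = κ * W p := by
    intro p
    have h1 : (rhat * s) ^ (-(α * T)) * (rhat * s) ^ (-(α * ((p.1:ℝ) + p.2)))
        = (rhat ^ e2 p)⁻¹ * (1/s) ^ e2 p := by
      rw [← Real.rpow_add hrs]
      have he : -(α * T) + -(α * ((p.1:ℝ) + p.2)) = -(e2 p) := by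
        simp only [he2def]; ring
      rw [he, Real.rpow_neg hrs.le, Real.mul_rpow hr.le hs.le, mul_inv, one_div,
        Real.inv_rpow hs.le]
    have hX : (rhat * s) ^ (-(α * T)) ≠ 0 := (Real.rpow_pos_of_pos hrs _).ne'
    have h2 : (rhat * s) ^ (-(α * ((p.1:ℝ) + p.2)))
        = (rhat ^ e2 p)⁻¹ * (1/s) ^ e2 p / (rhat * s) ^ (-(α * T)) := by
      rw [eq_div_iff hX, mul_comm]; exact h1
    rw [habsC p]
    simp only [hWdef, hκdef]
    rw [h2]
    have hz1 : rhat ^ e2 p ≠ 0 := (Real.rpow_pos_of_pos hr _).ne'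
    have hz2 : Real.Gamma ((p.1:ℝ) + T) ≠ 0 := (hGpos p.1).ne'
    have hz3 : (Nat.factorial p.2 : ℝ) ≠ 0 := (hfacpos p.2).ne'
    field_simp
    ring
  have hIntBase : ∀ p : ℕ × ℕ,
      IntegrableOn (fun x : ℝ => x ^ (e2 p - 1) * Real.exp (-(s * x))) (Set.Ioi (0:ℝ)) := by
    intro p
    have h := integrableOn_rpow_mul_exp_neg_mul_rpow
      (show (-1:ℝ) < e2 p - 1 by linarith [he2 p]) (zero_lt_one) hs
    simpa [Real.rpow_one, neg_mul] using h
  have hInt : ∀ p : ℕ × ℕ, IntegrableOn (F p) (Set.Ioi (0:ℝ)) := by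
    intro p
    simp only [hFdef]
    exact (hIntBase p).const_mul (C p)
  have hBaseVal : ∀ p : ℕ × ℕ,
      ∫ x in Set.Ioi (0:ℝ), x ^ (e2 p - 1) * Real.exp (-(s * x))
        = (1/s) ^ e2 p * Real.Gamma (e2 p) := fun p =>
    Real.integral_rpow_mul_exp_neg_mul_Ioi (he2 p) hs
  have hIntVal : ∀ p : ℕ × ℕ,
      ∫ r in Set.Ioi (0:ℝ), F p r = C p * ((1/s) ^ e2 p * Real.Gamma (e2 p)) := by
    intro p
    simp only [hFdef]
    rw [MeasureTheory.integral_const_mul, hBaseVal p]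
  have hNormVal : ∀ p : ℕ × ℕ,
      (∫ r in Set.Ioi (0:ℝ), ‖F p r‖) = κ * W p := by
    intro p
    rw [← hval p]
    have hcong : ∀ r ∈ Set.Ioi (0:ℝ),
        ‖F p r‖ = |C p| * (r ^ (e2 p - 1) * Real.exp (-(s * r))) := by
      intro r hr0
      rw [Set.mem_Ioi] at hr0
      simp only [hFdef]
      rw [Real.norm_eq_abs, abs_mul, abs_of_nonneg
        (mul_nonneg (Real.rpow_nonneg hr0.le _) (Real.exp_pos _).le)]
    rw [setIntegral_congr_fun measurableSet_Ioi hcong, MeasureTheory.integral_const_mul,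
      hBaseVal p]
  have hSumNorm : Summable (fun p : ℕ × ℕ => ∫ r in Set.Ioi (0:ℝ), ‖F p r‖) :=
    (hsum.mul_left κ).congr (fun p => (hNormVal p).symm)
  have hSumI : Summable (fun p : ℕ × ℕ => C p * ((1/s) ^ e2 p * Real.Gamma (e2 p))) := by
    apply Summable.of_norm
    refine (hsum.mul_left κ).congr (fun p => ?_)
    rw [Real.norm_eq_abs, abs_mul, abs_of_nonneg
      (mul_nonneg (Real.rpow_nonneg (by positivity) _) (Real.Gamma_pos_of_pos (he2 p)).le),
      hval p]
  have hpt : ∀ r ∈ Set.Ioi (0:ℝ),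
      Real.exp (-(s * r)) * f r = ∑' p : ℕ × ℕ, F p r := by
    intro r hr0
    rw [Set.mem_Ioi] at hr0
    set Q1 : ℝ := max (r * s) 1 with hQ1def
    have hQ1 : (1:ℝ) ≤ Q1 := le_max_right _ _
    set C0 : ℝ := 6 * Q1 ^ (3:ℕ) * Real.exp Q1 with hC0def
    have hQ1pos : (0:ℝ) < Q1 := lt_of_lt_of_le one_pos hQ1
    have hC0 : (0:ℝ) < C0 := by positivity
    set K : ℝ := α * Real.exp (-(s * r)) * (r ^ (α * T - 1) * (rhat ^ (α * T))⁻¹ * C0)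
      with hKdef
    have hbound : ∀ p : ℕ × ℕ, ‖F p r‖ ≤ K * W p := by
      rintro ⟨i, j⟩
      set v : ℝ := (i : ℝ) + (j : ℝ) with hvdef
      have hv : (0:ℝ) ≤ v := by positivity
      have hβ : (0:ℝ) ≤ α * v := by positivity
      have k1 : (r * s) ^ (α * v) ≤ Q1 ^ (α * v) :=
        Real.rpow_le_rpow (by positivity) (le_max_left _ _) hβ
      have k2 : Q1 ^ (α * v) ≤ Q1 ^ (e2 (i, j)) := by
        apply Real.rpow_le_rpow_of_exponent_le hQ1
        simp only [he2def, hvdef]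
        nlinarith
      have k3 := aux_gamma hQ1 (he2 (i, j))
      have key : (r * s) ^ (α * v) ≤ C0 * Real.Gamma (e2 (i, j)) := by
        rw [hC0def]; exact le_trans k1 (le_trans k2 k3)
      have key2 : r ^ (α * v) ≤ C0 * Real.Gamma (e2 (i, j)) * s ^ (-(α * v)) := by
        have h4 : r ^ (α * v) = (r * s) ^ (α * v) * s ^ (-(α * v)) := by
          rw [Real.mul_rpow hr0.le hs.le, Real.rpow_neg hs.le, mul_assoc,
            mul_inv_cancel₀ (Real.rpow_pos_of_pos hs _).ne', mul_one]
        rw [h4]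
        exact mul_le_mul_of_nonneg_right key (Real.rpow_nonneg hs.le _)
      have d1 : r ^ (e2 (i, j) - 1) = r ^ (α * T - 1) * r ^ (α * v) := by
        rw [← Real.rpow_add hr0]
        congr 1
        simp only [he2def, hvdef]; ring
      have d2 : (rhat ^ e2 (i, j))⁻¹ = (rhat ^ (α * T))⁻¹ * (rhat ^ (α * v))⁻¹ := by
        rw [← mul_inv, ← Real.rpow_add hr]
        congr 2
        simp only [he2def, hvdef]; ring
      have d3 : (rhat * s) ^ (-(α * v)) = (rhat ^ (α * v))⁻¹ * s ^ (-(α * v)) := by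
        rw [Real.mul_rpow hr.le hs.le, Real.rpow_neg hr.le]
      have hnormF : ‖F (i, j) r‖
          = α * |φ i| / (rhat ^ e2 (i, j) * Real.Gamma ((i:ℝ) + T) * (Nat.factorial j : ℝ))
            * (r ^ (e2 (i, j) - 1) * Real.exp (-(s * r))) := by
        simp only [hFdef]
        rw [Real.norm_eq_abs, abs_mul, abs_of_nonneg
          (mul_nonneg (Real.rpow_nonneg hr0.le _) (Real.exp_pos _).le)]
        rw [habsC (i, j)]
      rw [hnormF]
      have hWval : W (i, j) = |φ i| * Real.Gamma (e2 (i, j)) * (rhat * s) ^ (-(α * v)) /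
          (Real.Gamma ((i:ℝ) + T) * (Nat.factorial j : ℝ)) := by
        simp only [hWdef, he2def, hvdef]
      rw [hWval, hKdef, d3]
      have hS : r ^ (e2 (i, j) - 1) * (rhat ^ e2 (i, j))⁻¹
          ≤ r ^ (α * T - 1) * (rhat ^ (α * T))⁻¹ * C0 * Real.Gamma (e2 (i, j)) *
            ((rhat ^ (α * v))⁻¹ * s ^ (-(α * v))) := by
        rw [d1, d2]
        have hcommon : (0:ℝ) ≤ r ^ (α * T - 1) * (rhat ^ (α * T))⁻¹ * (rhat ^ (α * v))⁻¹ := by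
          positivity
        calc r ^ (α * T - 1) * r ^ (α * v) * ((rhat ^ (α * T))⁻¹ * (rhat ^ (α * v))⁻¹)
            = (r ^ (α * T - 1) * (rhat ^ (α * T))⁻¹ * (rhat ^ (α * v))⁻¹) * r ^ (α * v) := by
              ring
          _ ≤ (r ^ (α * T - 1) * (rhat ^ (α * T))⁻¹ * (rhat ^ (α * v))⁻¹) *
              (C0 * Real.Gamma (e2 (i, j)) * s ^ (-(α * v))) :=
              mul_le_mul_of_nonneg_left key2 hcommon
          _ = r ^ (α * T - 1) * (rhat ^ (α * T))⁻¹ * C0 * Real.Gamma (e2 (i, j)) *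
              ((rhat ^ (α * v))⁻¹ * s ^ (-(α * v))) := by ring
      have hpre : (0:ℝ) ≤ α * Real.exp (-(s * r)) * |φ i| /
          (Real.Gamma ((i:ℝ) + T) * (Nat.factorial j : ℝ)) := by
        have := (hGpos i).le
        have := (hfacpos j).le
        positivity
      calc α * |φ i| / (rhat ^ e2 (i, j) * Real.Gamma ((i:ℝ) + T) * (Nat.factorial j : ℝ))
            * (r ^ (e2 (i, j) - 1) * Real.exp (-(s * r)))
          = (α * Real.exp (-(s * r)) * |φ i| /
              (Real.Gamma ((i:ℝ) + T) * (Nat.factorial j : ℝ))) *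
            (r ^ (e2 (i, j) - 1) * (rhat ^ e2 (i, j))⁻¹) := by ring
        _ ≤ (α * Real.exp (-(s * r)) * |φ i| /
              (Real.Gamma ((i:ℝ) + T) * (Nat.factorial j : ℝ))) *
            (r ^ (α * T - 1) * (rhat ^ (α * T))⁻¹ * C0 * Real.Gamma (e2 (i, j)) *
              ((rhat ^ (α * v))⁻¹ * s ^ (-(α * v)))) :=
            mul_le_mul_of_nonneg_left hS hpre
        _ = α * Real.exp (-(s * r)) * (r ^ (α * T - 1) * (rhat ^ (α * T))⁻¹ * C0) *
            (|φ i| * Real.Gamma (e2 (i, j)) * ((rhat ^ (α * v))⁻¹ * s ^ (-(α * v))) /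
              (Real.Gamma ((i:ℝ) + T) * (Nat.factorial j : ℝ))) := by ring
    have hsumF : Summable (fun p : ℕ × ℕ => F p r) :=
      Summable.of_norm_bounded (hsum.mul_left K) hbound
    rw [hf r hr0, Summable.tsum_prod hsumF]
    have hsplit : ∀ i j : ℕ, F (i, j) r
        = (α * Real.exp (-(s * r)) * (φ i * r ^ (α * ((i:ℝ) + T) - 1) /
            (rhat ^ (α * ((i:ℝ) + T)) * Real.Gamma ((i:ℝ) + T)))) *
          ((-(r / rhat) ^ α) ^ j / (Nat.factorial j : ℝ)) := by
      intro i j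
      have e1 : r ^ (e2 (i, j) - 1) = r ^ (α * ((i:ℝ) + T) - 1) * r ^ (α * (j:ℝ)) := by
        rw [← Real.rpow_add hr0]; congr 1; simp only [he2def]; ring
      have e2' : rhat ^ e2 (i, j) = rhat ^ (α * ((i:ℝ) + T)) * rhat ^ (α * (j:ℝ)) := by
        rw [← Real.rpow_add hr]; congr 1; simp only [he2def]; ring
      have e3 : ((-(r / rhat) ^ α) ^ j : ℝ)
          = (-1:ℝ) ^ j * (r ^ (α * (j:ℝ)) / rhat ^ (α * (j:ℝ))) := by
        rw [neg_pow, ← Real.rpow_natCast ((r / rhat) ^ α) j, ← Real.rpow_mul (by positivity),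
          Real.div_rpow hr0.le hr.le]
      simp only [hFdef, hCdef]
      rw [e1, e2', e3]
      have hz1 : rhat ^ (α * ((i:ℝ) + T)) ≠ 0 := (Real.rpow_pos_of_pos hr _).ne'
      have hz2 : rhat ^ (α * (j:ℝ)) ≠ 0 := (Real.rpow_pos_of_pos hr _).ne'
      have hz3 : Real.Gamma ((i:ℝ) + T) ≠ 0 := (hGpos i).ne'
      have hz4 : (Nat.factorial j : ℝ) ≠ 0 := (hfacpos j).ne'
      field_simp
    calc Real.exp (-(s * r)) * (α * Real.exp (-(r / rhat) ^ α) *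
          ∑' i : ℕ, φ i * r ^ (α * ((i:ℝ) + T) - 1) /
            (rhat ^ (α * ((i:ℝ) + T)) * Real.Gamma ((i:ℝ) + T)))
        = ∑' i : ℕ, (α * Real.exp (-(s * r)) * Real.exp (-(r / rhat) ^ α)) *
            (φ i * r ^ (α * ((i:ℝ) + T) - 1) /
              (rhat ^ (α * ((i:ℝ) + T)) * Real.Gamma ((i:ℝ) + T))) := by
          rw [tsum_mul_left]; ring
      _ = ∑' (i : ℕ), ∑' (j : ℕ), F (i, j) r := by
          refine tsum_congr fun i => ?_
          rw [tsum_congr (fun j => hsplit i j), tsum_mul_left, ← aux_exp_tsum]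
          ring
  have hdiag_n : ∀ n : ℕ,
      ∑ kl ∈ Finset.HasAntidiagonal.antidiagonal n, C kl * ((1/s) ^ e2 kl * Real.Gamma (e2 kl))
        = (α / rhat ^ (α * T)) *
            (((Real.Gamma (α * ((n : ℝ) + T)) / rhat ^ (α * (n : ℝ))) *
              ∑ j ∈ Finset.range (n + 1),
                (-1 : ℝ) ^ (n - j) * φ j /
                  ((Nat.factorial (n - j) : ℝ) * Real.Gamma ((j : ℝ) + T))) *
            s ^ (-(α * ((n : ℝ) + T)))) := by
    intro n
    rw [Finset.Nat.sum_antidiagonal_eq_sum_range_succ_mk, Finset.mul_sum, Finset.sum_mul,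
      Finset.mul_sum]
    refine Finset.sum_congr rfl fun j hj => ?_
    have hjn : j ≤ n := Nat.lt_succ_iff.mp (Finset.mem_range.mp hj)
    have hcast : ((j : ℝ) + ((n - j : ℕ) : ℝ) + T) = (n : ℝ) + T := by
      rw [Nat.cast_sub hjn]; ring
    simp only [hCdef, he2def]
    rw [hcast]
    have hs1 : (1/s) ^ (α * ((n:ℝ) + T)) = s ^ (-(α * ((n:ℝ) + T))) := by
      rw [one_div, Real.inv_rpow hs.le, ← Real.rpow_neg hs.le]
    have hr1 : rhat ^ (α * ((n:ℝ) + T)) = rhat ^ (α * T) * rhat ^ (α * (n:ℝ)) := by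
      rw [← Real.rpow_add hr]; congr 1; ring
    rw [hs1, hr1]
    have hz1 : rhat ^ (α * T) ≠ 0 := (Real.rpow_pos_of_pos hr _).ne'
    have hz2 : rhat ^ (α * (n:ℝ)) ≠ 0 := (Real.rpow_pos_of_pos hr _).ne'
    have hz3 : Real.Gamma ((j:ℝ) + T) ≠ 0 := (hGpos j).ne'
    have hz4 : (Nat.factorial (n - j) : ℝ) ≠ 0 := (hfacpos (n - j)).ne'
    field_simp
  have hkey := MeasureTheory.integral_tsum_of_summable_integral_norm hInt hSumNorm
  calc ∫ r in Set.Ioi (0:ℝ), Real.exp (-(s * r)) * f r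
      = ∫ r in Set.Ioi (0:ℝ), ∑' p : ℕ × ℕ, F p r :=
        setIntegral_congr_fun measurableSet_Ioi hpt
    _ = ∑' p : ℕ × ℕ, ∫ r in Set.Ioi (0:ℝ), F p r := hkey.symm
    _ = ∑' p : ℕ × ℕ, C p * ((1/s) ^ e2 p * Real.Gamma (e2 p)) := tsum_congr hIntVal
    _ = ∑' n : ℕ, ∑ kl ∈ Finset.HasAntidiagonal.antidiagonal n,
          C kl * ((1/s) ^ e2 kl * Real.Gamma (e2 kl)) := aux_diag hSumI
    _ = ∑' n : ℕ, (α / rhat ^ (α * T)) *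
          (((Real.Gamma (α * ((n : ℝ) + T)) / rhat ^ (α * (n : ℝ))) *
            ∑ j ∈ Finset.range (n + 1),
              (-1 : ℝ) ^ (n - j) * φ j /
                ((Nat.factorial (n - j) : ℝ) * Real.Gamma ((j : ℝ) + T))) *
          s ^ (-(α * ((n : ℝ) + T)))) := tsum_congr hdiag_n
    _ = (α / rhat ^ (α * T)) *
        ∑' k : ℕ,
          ((Real.Gamma (α * ((k : ℝ) + T)) / rhat ^ (α * (k : ℝ))) *
            ∑ j ∈ Finset.range (k + 1),
              (-1 : ℝ) ^ (k - j) * φ j /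
                ((Nat.factorial (k - j) : ℝ) * Real.Gamma ((j : ℝ) + T))) *
          s ^ (-(α * ((k : ℝ) + T))) := by
        rw [tsum_mul_left]
end

section
/- Let 0 < α_M < α_Q, μ_M > 0, μ_Q > 0, ϱ̃ > 0, and for i ≥ 0 define u_i = ((−1)^i/i!)·ϱ̃^{α_M(μ_M+i)}·Γ(α_M(i+μ_M))·Γ(α_M(i+μ_M)/α_Q + μ_Q). Then lim_{i→∞} |u_i|/Γ(α_M·i + α_M·μ_M) = 0. -/
lemma gamma_add_le_aux (x c : ℝ) (hx : 0 < x) (hc : 0 < c) (hc1 : c < 1) :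
    Real.Gamma (x + c) ≤ Real.Gamma x * x ^ c := by
  have gpos := Real.Gamma_pos_of_pos hx
  have h := Real.Gamma_mul_add_mul_le_rpow_Gamma_mul_rpow_Gamma hx
    (by linarith : (0:ℝ) < x + 1) (by linarith : (0:ℝ) < 1 - c) hc (by ring)
  have e1 : (1 - c) * x + c * (x + 1) = x + c := by ring
  rw [e1, Real.Gamma_add_one hx.ne'] at h
  calc Real.Gamma (x + c) ≤ Real.Gamma x ^ (1 - c) * (x * Real.Gamma x) ^ c := h
    _ = Real.Gamma x * x ^ c := by
        rw [Real.mul_rpow hx.le gpos.le,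
          show Real.Gamma x ^ (1-c) * (x ^ c * Real.Gamma x ^ c)
            = x ^ c * (Real.Gamma x ^ (1-c) * Real.Gamma x ^ c) from by ring,
          ← Real.rpow_add gpos, sub_add_cancel, Real.rpow_one, mul_comm]

/-- Growth constraint on the Laplace-transform coefficients of the ratio of two
α-μ distributions (Appendix F): `|u_i| / Γ(α_M i + α_M μ_M) → 0`. -/
theorem stmt_19 (αM αQ μM μQ ϱ : ℝ)
    (hαM : 0 < αM) (hαMQ : αM < αQ) (hμM : 0 < μM) (hμQ : 0 < μQ) (hϱ : 0 < ϱ)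
    (u : ℕ → ℝ)
    (hu : ∀ i : ℕ,
      u i = ((-1 : ℝ) ^ i / (Nat.factorial i : ℝ)) * ϱ ^ (αM * (μM + i)) *
        Real.Gamma (αM * ((i : ℝ) + μM)) *
          Real.Gamma (αM * ((i : ℝ) + μM) / αQ + μQ)) :
    Filter.Tendsto (fun i : ℕ => |u i| / Real.Gamma (αM * i + αM * μM))
      Filter.atTop (nhds 0) := by
  have hαQ : (0:ℝ) < αQ := hαM.trans hαMQ
  obtain ⟨c, hcdef⟩ : ∃ c : ℝ, c = αM / αQ := ⟨_, rfl⟩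
  obtain ⟨d, hddef⟩ : ∃ d : ℝ, d = αM * μM / αQ + μQ := ⟨_, rfl⟩
  have hc : 0 < c := hcdef ▸ div_pos hαM hαQ
  have hc1 : c < 1 := hcdef ▸ (div_lt_one hαQ).mpr hαMQ
  have hd : 0 < d := by rw [hddef]; positivity
  obtain ⟨f, hfdef⟩ : ∃ f : ℕ → ℝ,
      f = fun i : ℕ => ϱ ^ (αM * (μM + i)) * Real.Gamma (c * i + d) / i.factorial := ⟨_, rfl⟩
  have hargpos : ∀ i : ℕ, (0:ℝ) < c * i + d := fun i => by positivity
  have hfapp : ∀ i : ℕ,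
      f i = ϱ ^ (αM * (μM + i)) * Real.Gamma (c * i + d) / i.factorial := fun i => by
    rw [hfdef]
  have hfpos : ∀ i, 0 < f i := by
    intro i
    rw [hfapp]
    have h1 := Real.Gamma_pos_of_pos (hargpos i)
    have h2 := Real.rpow_pos_of_pos hϱ (αM * (μM + i))
    have h3 : (0:ℝ) < i.factorial := by exact_mod_cast i.factorial_pos
    positivity
  -- the target function equals f
  have hEq : ∀ i : ℕ, |u i| / Real.Gamma (αM * i + αM * μM) = f i := by
    intro i
    have hGpos : 0 < Real.Gamma (αM * ((i:ℝ) + μM)) :=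
      Real.Gamma_pos_of_pos (by positivity)
    have hG2pos : 0 < Real.Gamma (αM * ((i:ℝ) + μM) / αQ + μQ) :=
      Real.Gamma_pos_of_pos (by positivity)
    have hrpos := Real.rpow_pos_of_pos hϱ (αM * (μM + i))
    have e1 : αM * ((i:ℝ) + μM) = αM * i + αM * μM := by ring
    have e2 : αM * ((i:ℝ) + μM) / αQ + μQ = c * i + d := by
      rw [hcdef, hddef]; field_simp; ring
    have hfacpos : (0:ℝ) < i.factorial := by exact_mod_cast i.factorial_pos
    rw [hu i, abs_mul, abs_mul, abs_mul, abs_div, abs_pow, abs_neg, abs_one, one_pow,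
      abs_of_pos hrpos, abs_of_pos hGpos, abs_of_pos hG2pos,
      Nat.abs_cast, e2, ← e1, hfapp]
    field_simp
  -- ratio bound
  have hratio_le : ∀ᶠ n in Filter.atTop,
      ‖f (n + 1)‖ / ‖f n‖ ≤ ϱ ^ αM * ((n:ℝ) + 1) ^ (c - 1) := by
    filter_upwards [Filter.eventually_ge_atTop (⌈d / (1 - c)⌉₊)] with n hn
    have hn' : d / (1 - c) ≤ (n:ℝ) := le_trans (Nat.le_ceil _) (by exact_mod_cast hn)
    have hle1 : c * n + d ≤ (n:ℝ) + 1 := by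
      have : d ≤ (1 - c) * n := by
        rw [div_le_iff₀ (by linarith : (0:ℝ) < 1 - c)] at hn'
        linarith
      nlinarith
    have hnfacpos : (0:ℝ) < n.factorial := by exact_mod_cast n.factorial_pos
    have hrp := Real.rpow_pos_of_pos hϱ (αM * (μM + n))
    have hGp := Real.Gamma_pos_of_pos (hargpos n)
    have hGle : Real.Gamma ((c * n + d) + c)
        ≤ Real.Gamma (c * n + d) * (c * n + d) ^ c :=
      gamma_add_le_aux _ _ (hargpos n) hc hc1
    have expand : f (n+1) = ϱ ^ (αM * (μM + (n:ℝ))) * ϱ ^ αM *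
        Real.Gamma ((c * n + d) + c) / (((n:ℝ) + 1) * n.factorial) := by
      rw [hfapp]
      have hfac : (((n+1).factorial : ℕ) : ℝ) = ((n:ℝ) + 1) * n.factorial := by
        push_cast [Nat.factorial_succ]; ring
      have ec : ((n+1:ℕ):ℝ) = (n:ℝ) + 1 := by push_cast; ring
      rw [hfac, ec, show c * ((n:ℝ) + 1) + d = (c * n + d) + c from by ring,
        show αM * (μM + ((n:ℝ) + 1)) = αM * (μM + (n:ℝ)) + αM from by ring,
        Real.rpow_add hϱ]
    have rhs_eq : f n * (ϱ ^ αM * (c * n + d) ^ c / ((n:ℝ) + 1)) =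
        ϱ ^ (αM * (μM + (n:ℝ))) * ϱ ^ αM *
          (Real.Gamma (c * n + d) * (c * n + d) ^ c) / (((n:ℝ) + 1) * n.factorial) := by
      rw [hfapp]
      field_simp
    have step1 : f (n+1) ≤ f n * (ϱ ^ αM * (c * n + d) ^ c / ((n:ℝ) + 1)) := by
      rw [expand, rhs_eq]
      gcongr
    have hfn := hfpos n
    have hfn1 := hfpos (n+1)
    rw [Real.norm_eq_abs, Real.norm_eq_abs, abs_of_pos hfn1, abs_of_pos hfn]
    have step2 : (c * n + d) ^ c ≤ ((n:ℝ) + 1) ^ c :=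
      Real.rpow_le_rpow (hargpos n).le hle1 hc.le
    have h4 : f (n+1) / f n ≤ ϱ ^ αM * (c * n + d) ^ c / ((n:ℝ) + 1) := by
      rw [div_le_iff₀ hfn]
      calc f (n+1) ≤ f n * (ϱ ^ αM * (c * n + d) ^ c / ((n:ℝ) + 1)) := step1
        _ = ϱ ^ αM * (c * n + d) ^ c / ((n:ℝ) + 1) * f n := by ring
    refine h4.trans ?_
    have e3 : ((n:ℝ) + 1) ^ (c - 1) = ((n:ℝ) + 1) ^ c / ((n:ℝ) + 1) := by
      rw [Real.rpow_sub (by positivity), Real.rpow_one]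
    rw [e3, mul_div_assoc]
    gcongr
  -- the bounding sequence tends to 0
  have hbound : Filter.Tendsto (fun n : ℕ => ϱ ^ αM * ((n:ℝ) + 1) ^ (c - 1))
      Filter.atTop (nhds 0) := by
    have h1 : Filter.Tendsto (fun n : ℕ => ((n:ℝ) + 1)) Filter.atTop Filter.atTop :=
      Filter.tendsto_atTop_add_const_right _ 1 tendsto_natCast_atTop_atTop
    have h2 : Filter.Tendsto (fun x : ℝ => x ^ (-(1 - c))) Filter.atTop (nhds 0) :=
      tendsto_rpow_neg_atTop (by linarith)
    have h3 := (h2.comp h1).const_mul (ϱ ^ αM)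
    rw [mul_zero] at h3
    have : (fun n : ℕ => ϱ ^ αM * ((n:ℝ) + 1) ^ (c - 1)) =
        fun n : ℕ => ϱ ^ αM * ((fun x : ℝ => x ^ (-(1 - c))) ∘ fun n : ℕ => ((n:ℝ) + 1)) n := by
      funext n
      simp [Function.comp, neg_sub]
    rw [this]
    exact h3
  -- ratio tends to 0
  have hratio : Filter.Tendsto (fun n => ‖f (n + 1)‖ / ‖f n‖) Filter.atTop (nhds 0) := by
    apply squeeze_zero' ?_ hratio_le hbound
    filter_upwards with n
    positivity
  have hsum : Summable f :=
    summable_of_ratio_test_tendsto_lt_one one_pos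
      (Filter.Eventually.of_forall fun n => (hfpos n).ne') hratio
  exact hsum.tendsto_atTop_zero.congr fun i => (hEq i).symm
end
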